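/- arXiv:2006.10364 — 7 statements merged into one kernel-verified Lean document; each statement's English description precedes it below -/
import Mathlib

section
/- If a graph G is k-contractible to a complete graph, then there exists a set S of at most 2k vertices of G such that the induced subgraph G − S is a complete graph. -/
/-- `ψ` realizes an `H`-witness structure of `G`. -/
def IsWitnessStructure {V W : Type*} (G : SimpleGraph V) (H : SimpleGraph W) (ψ : V → W) : Prop :=
  Function.Surjective ψ ∧
  (∀ h : W, (G.induce {v | ψ v = h}).Connected) ∧
  (∀ h h' : W, h ≠ h' →
    (H.Adj h h' ↔ ∃ u v : V, G.Adj u v ∧ ψ u = h ∧ ψ v = h'))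

/-! Deleting every vertex that lies in a nontrivial witness set leaves only singleton witness
sets, and two singleton witness sets of adjacent vertices of `H` must themselves be adjacent in
`G`. A nontrivial witness set `W(h)` has `|W(h)| ≤ 2 (|W(h)| - 1)`, so at most `2k` vertices are
deleted. -/

theorem IsWitnessStructure.adj_of_subsingleton {V W : Type*} {G : SimpleGraph V}
    {H : SimpleGraph W} {ψ : V → W} (hw : IsWitnessStructure G H ψ) {u v : V}
    (hu : {x | ψ x = ψ u}.Subsingleton) (hv : {x | ψ x = ψ v}.Subsingleton)
    (hadj : H.Adj (ψ u) (ψ v)) : G.Adj u v := by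
  obtain ⟨u', v', hG, hu', hv'⟩ := (hw.2.2 _ _ hadj.ne).mp hadj
  rwa [hu hu' rfl, hv hv' rfl] at hG

theorem ncard_setOf_not_subsingleton_fiber_le {α β : Type*} [Finite α] [Fintype β] (f : α → β) :
    {a | ¬ {x | f x = f a}.Subsingleton}.ncard ≤ 2 * ∑ b, ({x | f x = b}.ncard - 1) := by
  classical
  have : Fintype α := Fintype.ofFinite α
  rw [Set.ncard_eq_toFinset_card', Finset.card_eq_sum_card_fiberwise (f := f) (t := Finset.univ)
    (fun _ _ => Finset.mem_univ _), Finset.mul_sum]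
  gcongr with b
  by_cases hb : {x | f x = b}.Subsingleton
  · refine (Finset.card_eq_zero.mpr (Finset.filter_eq_empty_iff.mpr ?_)).trans_le (Nat.zero_le _)
    rintro a ha rfl
    exact (Set.mem_toFinset.mp ha) hb
  · have hfiber : 1 < {x | f x = b}.ncard :=
      Set.one_lt_ncard_iff_nontrivial.mpr (Set.not_subsingleton_iff.mp hb)
    calc _ ≤ {x | f x = b}.toFinset.card :=
          Finset.card_le_card fun a ha => Set.mem_toFinset.mpr (Finset.mem_filter.mp ha).2
      _ = {x | f x = b}.ncard := (Set.ncard_eq_toFinset_card' _).symm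
      _ ≤ 2 * ({x | f x = b}.ncard - 1) := by omega

/-- If `G` is `k`-contractible to a complete graph, then one can delete at most `2k`
vertices from `G` so that the remaining induced subgraph is complete. -/
theorem stmt_2 {V W : Type*} [Fintype V] [Fintype W]
    (G : SimpleGraph V) (H : SimpleGraph W) (ψ : V → W) (k : ℕ)
    (hcomplete : ∀ h h' : W, h ≠ h' → H.Adj h h')
    (hw : IsWitnessStructure G H ψ)
    (hcost : ∑ h : W, ({v : V | ψ v = h}.ncard - 1) ≤ k) :
    ∃ S : Set V, S.ncard ≤ 2 * k ∧
      ∀ u v : V, u ∉ S → v ∉ S → u ≠ v → G.Adj u v := by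
  refine ⟨{v | ¬ {x | ψ x = ψ v}.Subsingleton},
    (ncard_setOf_not_subsingleton_fiber_le ψ).trans (Nat.mul_le_mul_left 2 hcost), ?_⟩
  intro u v hu hv huv
  rw [Set.mem_ofPred_eq, not_not] at hu hv
  exact hw.adj_of_subsingleton hu hv (hcomplete _ _ fun h => huv (hu rfl h.symm))
end

section
/- If a graph G is k-contractible to a split graph, then there exists a set S of at most 2k vertices of G such that the induced subgraph G − S is a split graph. -/
/-!
Delete every vertex lying in a nontrivial witness set. A witness set of size `s ≥ 2` costs
`s - 1` contractions and contributes `s ≤ 2 (s - 1)` deleted vertices. On the remaining vertices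
`ψ` is injective and preserves and reflects adjacency, so `G - S` is an induced subgraph of the
split graph `H`, and splitness passes to induced subgraphs.
-/

open Set

namespace SimpleGraph

variable {V W : Type*}

def IsSplitPartition (G : SimpleGraph V) (T C I : Set V) : Prop :=
  C ∪ I = T ∧ Disjoint C I ∧
    (∀ u ∈ C, ∀ v ∈ C, u ≠ v → G.Adj u v) ∧
    (∀ u ∈ I, ∀ v ∈ I, ¬ G.Adj u v)

theorem IsSplitPartition.comap {G : SimpleGraph V} {H : SimpleGraph W} {f : V → W}
    {T : Set V} {U C I : Set W} (hsplit : H.IsSplitPartition U C I) (hmaps : MapsTo f T U)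
    (hinj : InjOn f T) (hadj : ∀ u ∈ T, ∀ v ∈ T, G.Adj u v ↔ H.Adj (f u) (f v)) :
    G.IsSplitPartition T (T ∩ f ⁻¹' C) (T ∩ f ⁻¹' I) := by
  obtain ⟨hunion, hdisj, hclique, hindep⟩ := hsplit
  refine ⟨?_, ?_, ?_, ?_⟩
  · rw [← inter_union_distrib_left, ← preimage_union, hunion]
    exact inter_eq_left.mpr hmaps
  · exact (hdisj.preimage f).mono inter_subset_right inter_subset_right
  · rintro u ⟨huT, huC⟩ v ⟨hvT, hvC⟩ huv
    exact (hadj u huT v hvT).mpr (hclique _ huC _ hvC fun h => huv (hinj huT hvT h))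
  · rintro u ⟨huT, huI⟩ v ⟨hvT, hvI⟩ huv
    exact hindep _ huI _ hvI ((hadj u huT v hvT).mp huv)

end SimpleGraph

section WitnessStructure

variable {V W : Type*}

def nontrivialFiberSet (ψ : V → W) : Set V :=
  {v | 1 < {u | ψ u = ψ v}.ncard}

theorem eq_of_notMem_nontrivialFiberSet [Finite V] {ψ : V → W} {u v : V}
    (hv : v ∉ nontrivialFiberSet ψ) (huv : ψ u = ψ v) : u = v :=
  (ncard_le_one_iff (s := {w | ψ w = ψ v})).mp (not_lt.mp hv) huv rfl

theorem injOn_compl_nontrivialFiberSet [Finite V] (ψ : V → W) :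
    InjOn ψ (nontrivialFiberSet ψ)ᶜ :=
  fun _ _ _ hv huv => eq_of_notMem_nontrivialFiberSet hv huv

theorem ncard_nontrivialFiberSet_le [Fintype W] (ψ : V → W) :
    (nontrivialFiberSet ψ).ncard ≤ 2 * ∑ h, ({v | ψ v = h}.ncard - 1) := by
  set S := nontrivialFiberSet ψ
  have hfiber : ∀ h, (S ∩ {v | ψ v = h}).ncard ≤ 2 * ({v | ψ v = h}.ncard - 1) := by
    intro h
    rcases (S ∩ {v | ψ v = h}).eq_empty_or_nonempty with hempty | ⟨v, hvS, rfl⟩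
    · simp [hempty]
    · have hfin := finite_of_ncard_pos (zero_lt_one.trans hvS)
      have := ncard_le_ncard (inter_subset_right (s := S)) hfin
      change 1 < _ at hvS
      omega
  calc S.ncard = (⋃ h, S ∩ {v | ψ v = h}).ncard := by
        rw [← inter_iUnion, iUnion_eq_univ_iff.mpr (fun v => ⟨ψ v, rfl⟩), inter_univ]
    _ ≤ ∑ h, (S ∩ {v | ψ v = h}).ncard := ncard_iUnion_le_of_fintype _
    _ ≤ ∑ h, 2 * ({v | ψ v = h}.ncard - 1) := Finset.sum_le_sum fun h _ => hfiber h
    _ = 2 * ∑ h, ({v | ψ v = h}.ncard - 1) := (Finset.mul_sum ..).symm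

theorem IsWitnessStructure.adj_iff_of_notMem_nontrivialFiberSet [Finite V]
    {G : SimpleGraph V} {H : SimpleGraph W} {ψ : V → W} (hw : IsWitnessStructure G H ψ)
    {u v : V} (hu : u ∉ nontrivialFiberSet ψ) (hv : v ∉ nontrivialFiberSet ψ) :
    G.Adj u v ↔ H.Adj (ψ u) (ψ v) := by
  by_cases huv : ψ u = ψ v
  · obtain rfl := eq_of_notMem_nontrivialFiberSet hv huv
    simp
  rw [hw.2.2 _ _ huv]
  constructor
  · exact fun hadj => ⟨u, v, hadj, rfl, rfl⟩
  · rintro ⟨u', v', hadj, hu', hv'⟩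
    rwa [eq_of_notMem_nontrivialFiberSet hu hu', eq_of_notMem_nontrivialFiberSet hv hv'] at hadj

end WitnessStructure

/-- If `G` is `k`-contractible to a split graph, then one can delete at most `2k`
vertices from `G` so that the remaining induced subgraph is a split graph. -/
theorem stmt_3 {V W : Type*} [Fintype V] [Fintype W]
    (G : SimpleGraph V) (H : SimpleGraph W) (ψ : V → W) (k : ℕ)
    (hsplit : ∃ C I : Set W, C ∪ I = Set.univ ∧ Disjoint C I ∧
      (∀ u ∈ C, ∀ v ∈ C, u ≠ v → H.Adj u v) ∧
      (∀ u ∈ I, ∀ v ∈ I, ¬ H.Adj u v))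
    (hw : IsWitnessStructure G H ψ)
    (hcost : ∑ h : W, ({v : V | ψ v = h}.ncard - 1) ≤ k) :
    ∃ S : Set V, S.ncard ≤ 2 * k ∧
      ∃ C I : Set V, C ∪ I = Sᶜ ∧ Disjoint C I ∧
        (∀ u ∈ C, ∀ v ∈ C, u ≠ v → G.Adj u v) ∧
        (∀ u ∈ I, ∀ v ∈ I, ¬ G.Adj u v) := by
  obtain ⟨C, I, hCI⟩ := hsplit
  have hadj : ∀ u ∈ (nontrivialFiberSet ψ)ᶜ, ∀ v ∈ (nontrivialFiberSet ψ)ᶜ,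
      G.Adj u v ↔ H.Adj (ψ u) (ψ v) :=
    fun _ hu _ hv => hw.adj_iff_of_notMem_nontrivialFiberSet hu hv
  exact ⟨nontrivialFiberSet ψ,
    (ncard_nontrivialFiberSet_le ψ).trans (Nat.mul_le_mul_left 2 hcost), _, _,
    (show H.IsSplitPartition univ C I from hCI).comap (mapsTo_univ _ _)
      (injOn_compl_nontrivialFiberSet ψ) hadj⟩
end

section
/- Let G be a connected graph that is contractible to a split graph H with contraction cost c (i.e., via an H-witness structure with Σ_{h ∈ V(H)} (|W(h)| − 1) = c). Then G is contractible to a split graph H' with contraction cost at most c such that H' admits a split partition (C, I) into a clique C and an independent set I in which every vertex of I has a trivial (singleton) witness set; that is, all vertices of H' corresponding to nontrivial witness sets lie on the clique side. -/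
/-!
Let `i` be a vertex on the independent side whose witness set `S` has at least two vertices.
Since `G` is connected and `H` has another vertex, `S` is joined by an edge `u – w` to the
witness set of a neighbour `c`, which must lie on the clique side. A spanning tree of `G[S]` has
two leaves, so some `v ∈ S` other than `u` leaves `G[S - v]` connected. Moving `S - v` into the
witness set of `c` keeps every witness set connected, makes `W(i) = {v}`, does not change the
number of witness sets (hence the cost), and keeps `(C, I)` a split partition: only edges leaving
`W(i)` change their image, and they now end on the clique side. Each such move makes one more
witness set on the independent side trivial. If `H` has a single vertex, it goes on the clique
side.
-/

open Function Set

namespace SimpleGraph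

variable {V W : Type*}

lemma IsTree.exists_ne_connected_induce_compl_singleton [Finite V] [Nontrivial V]
    {G T : SimpleGraph V} (hT : T.IsTree) (hTG : T ≤ G) (r : V) :
    ∃ v, v ≠ r ∧ (G.induce {v}ᶜ).Connected := by
  have := Fintype.ofFinite V
  classical
  obtain ⟨u, w, huw, hu, hw⟩ := hT.exists_ne_and_degree_eq_one
  have hleaf {x : V} (hx : T.degree x = 1) : (G.induce {x}ᶜ).Connected :=
    (hT.connected.induce_compl_singleton_of_degree_eq_one hx).mono (by tauto)
  by_cases hur : u = r
  · exact ⟨w, hur ▸ huw.symm, hleaf hw⟩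
  · exact ⟨u, hur, hleaf hu⟩

lemma Connected.exists_ne_connected_induce_diff_singleton [Finite V] {G : SimpleGraph V}
    {S : Set V} (hS : (G.induce S).Connected) (hSnt : S.Nontrivial) {r : V} (hr : r ∈ S) :
    ∃ v ∈ S, v ≠ r ∧ (G.induce (S \ {v})).Connected := by
  have : Nontrivial S := hSnt.coe_sort
  obtain ⟨T, hTG, hT⟩ := hS.exists_isTree_le
  obtain ⟨v, hvr, hv⟩ := hT.exists_ne_connected_induce_compl_singleton hTG ⟨r, hr⟩
  let f : (G.induce S).induce {v}ᶜ →g G.induce (S \ {v.1}) :=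
    { toFun x := ⟨x.1.1, x.1.2, fun h => x.2 (Subtype.ext h)⟩
      map_rel' h := h }
  have hf : Surjective f := fun y =>
    ⟨⟨⟨y.1, y.2.1⟩, fun h => y.2.2 (congrArg Subtype.val h)⟩, rfl⟩
  exact ⟨v, v.2, fun h => hvr (Subtype.ext h), hv.map f hf⟩

end SimpleGraph

open SimpleGraph

section contraction

variable {V W : Type*}

def quotientGraph (G : SimpleGraph V) (ψ : V → W) : SimpleGraph W where
  Adj h h' := h ≠ h' ∧ ∃ u v, G.Adj u v ∧ ψ u = h ∧ ψ v = h'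
  symm := ⟨fun _ _ ⟨hne, u, v, huv, hu, hv⟩ => ⟨hne.symm, v, u, huv.symm, hv, hu⟩⟩
  loopless := ⟨fun _ h => h.1 rfl⟩

lemma quotientGraph_adj {G : SimpleGraph V} {ψ : V → W} {h h' : W} :
    (quotientGraph G ψ).Adj h h' ↔ h ≠ h' ∧ ∃ u v, G.Adj u v ∧ ψ u = h ∧ ψ v = h' :=
  Iff.rfl

def IsContraction (G : SimpleGraph V) (ψ : V → W) : Prop :=
  ∀ h, (G.induce {v | ψ v = h}).Connected

structure IsSplitPartition (H : SimpleGraph W) (C I : Set W) : Prop where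
  union_eq : C ∪ I = univ
  disjoint : Disjoint C I
  adj : ∀ u ∈ C, ∀ v ∈ C, u ≠ v → H.Adj u v
  not_adj : ∀ u ∈ I, ∀ v ∈ I, ¬ H.Adj u v

noncomputable def contractionCost [Fintype W] (ψ : V → W) : ℕ :=
  ∑ h, ({v | ψ v = h}.ncard - 1)

lemma IsContraction.surjective {G : SimpleGraph V} {ψ : V → W} (hψ : IsContraction G ψ) :
    Surjective ψ := fun h =>
  let ⟨⟨v, hv⟩⟩ := (hψ h).nonempty
  ⟨v, hv⟩

lemma isWitnessStructure_iff {G : SimpleGraph V} {H : SimpleGraph W} {ψ : V → W} :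
    IsWitnessStructure G H ψ ↔ IsContraction G ψ ∧ H = quotientGraph G ψ := by
  refine ⟨fun ⟨_, hfib, hadj⟩ => ⟨hfib, ?_⟩, fun ⟨hψ, hH⟩ => ⟨hψ.surjective, hψ, ?_⟩⟩
  · ext h h'
    by_cases hh : h = h'
    · simp [hh]
    · exact (hadj h h' hh).trans (and_iff_right hh).symm
  · subst hH
    exact fun h h' hh => and_iff_right hh

lemma contractionCost_add_card [Fintype V] [Fintype W] {ψ : V → W} (hψ : Surjective ψ) :
    contractionCost ψ + Fintype.card W = Fintype.card V := by
  classical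
  have hpos (h : W) : 1 ≤ {v | ψ v = h}.ncard := by
    obtain ⟨v, hv⟩ := hψ h
    exact (ncard_pos (toFinite _)).2 ⟨v, hv⟩
  calc contractionCost ψ + Fintype.card W = ∑ h, {v | ψ v = h}.ncard := by
        rw [contractionCost, ← Finset.card_univ, Finset.card_eq_sum_ones, ← Finset.sum_add_distrib]
        exact Finset.sum_congr rfl fun h _ => Nat.sub_add_cancel (hpos h)
    _ = Fintype.card V := by
        simp only [ncard_eq_toFinset_card', toFinset_ofPred]
        exact (Finset.card_eq_sum_card_fiberwise fun v _ => Finset.mem_univ (ψ v)).symm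

lemma quotientGraph_exists_adj [Nontrivial W] {G : SimpleGraph V} (hG : G.Connected) {ψ : V → W}
    (hψ : Surjective ψ) (h : W) : ∃ h', (quotientGraph G ψ).Adj h h' := by
  obtain ⟨h', hh'⟩ := exists_ne h
  obtain ⟨x, rfl⟩ := hψ h
  obtain ⟨y, rfl⟩ := hψ h'
  obtain ⟨d, -, hd, hd'⟩ := (hG.preconnected x y).some.exists_boundary_dart
    {z | ψ z = ψ x} rfl hh'
  exact ⟨ψ d.snd, quotientGraph_adj.2 ⟨fun h => hd' h.symm, d.fst, d.snd, d.adj, hd, rfl⟩⟩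

lemma IsSplitPartition.quotientGraph_of_forall_ne {G : SimpleGraph V} {ψ ψ' : V → W}
    {C I : Set W} (hs : IsSplitPartition (quotientGraph G ψ) C I)
    (hmove : ∀ x, ψ' x ≠ ψ x → ψ x ∈ I ∧ ψ' x ∈ C) :
    IsSplitPartition (quotientGraph G ψ') C I := by
  obtain ⟨hcov, hdisj, hclique, hindep⟩ := hs
  have hC {x} (hx : ψ x ∈ C) : ψ' x = ψ x := by
    by_contra hne
    exact hdisj.ne_of_mem hx (hmove x hne).1 rfl
  have hI {x} (hx : ψ' x ∈ I) : ψ' x = ψ x := by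
    by_contra hne
    exact hdisj.ne_of_mem (hmove x hne).2 hx rfl
  refine ⟨hcov, hdisj, fun u hu w hw huw => ?_, fun u hu w hw huw' => ?_⟩
  · obtain ⟨-, a, b, hab, rfl, rfl⟩ := hclique u hu w hw huw
    exact quotientGraph_adj.2 ⟨huw, a, b, hab, hC hu, hC hw⟩
  · obtain ⟨huw, a, b, hab, rfl, rfl⟩ := huw'
    exact hindep _ hu _ hw ⟨huw, a, b, hab, (hI hu).symm, (hI hw).symm⟩

def reassign (ψ : V → W) (T : Set V) [DecidablePred (· ∈ T)] (c : W) : V → W :=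
  fun x => if x ∈ T then c else ψ x

section reassign

variable (ψ : V → W) (T : Set V) [DecidablePred (· ∈ T)] {c : W}

lemma fiber_reassign_of_ne {j : W} (hj : j ≠ c) :
    {x | reassign ψ T c x = j} = {x | ψ x = j} \ T := by
  ext x
  by_cases hx : x ∈ T <;> simp [reassign, hx, Ne.symm hj]

lemma fiber_reassign_self : {x | reassign ψ T c x = c} = {x | ψ x = c} ∪ T := by
  ext x
  by_cases hx : x ∈ T <;> simp [reassign, hx]

variable {ψ T}

lemma mem_of_reassign_ne {x : V} (hx : reassign ψ T c x ≠ ψ x) : x ∈ T ∧ reassign ψ T c x = c := by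
  by_cases hxT : x ∈ T <;> simp_all [reassign]

lemma IsContraction.reassign {G : SimpleGraph V} (hψ : IsContraction G ψ) {i : W} (hic : i ≠ c)
    (hTi : T ⊆ {x | ψ x = i}) (hrest : (G.induce ({x | ψ x = i} \ T)).Connected)
    (hT : (G.induce T).Connected) {u w : V} (huw : G.Adj u w) (hu : ψ u = c) (hw : w ∈ T) :
    IsContraction G (reassign ψ T c) := by
  intro j
  by_cases hjc : j = c
  · subst hjc
    rw [fiber_reassign_self]
    exact connected_induce_union (hψ j).preconnected hT.preconnected hu hw huw
  rw [fiber_reassign_of_ne ψ T hjc]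
  by_cases hji : j = i
  · exact hji ▸ hrest
  have hdisj : Disjoint {x | ψ x = j} T :=
    disjoint_left.2 fun x hxj hxT => hji (hxj.symm.trans (hTi hxT))
  rw [hdisj.sdiff_eq_left]
  exact hψ j

end reassign

lemma IsContraction.exists_fiber_eq_singleton [Finite V] [Nontrivial W] {G : SimpleGraph V}
    (hG : G.Connected) {ψ : V → W} (hψ : IsContraction G ψ) {C I : Set W}
    (hs : IsSplitPartition (quotientGraph G ψ) C I) {i : W} (hi : i ∈ I)
    (hnt : {x | ψ x = i}.Nontrivial) :
    ∃ ψ' : V → W, IsContraction G ψ' ∧ (∀ x, ψ' x ≠ ψ x → ψ x ∈ I ∧ ψ' x ∈ C) ∧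
      ∃ v, {x | ψ' x = i} = {v} := by
  classical
  obtain ⟨c, hic, u, w, huw, hu, hw⟩ := quotientGraph_exists_adj hG hψ.surjective i
  have hc : c ∈ C := by
    have hc : c ∈ C ∪ I := hs.union_eq ▸ mem_univ c
    exact hc.resolve_right fun hcI => hs.not_adj i hi c hcI ⟨hic, u, w, huw, hu, hw⟩
  obtain ⟨v, hv, hvu, hconn⟩ := (hψ i).exists_ne_connected_induce_diff_singleton hnt hu
  have hrest : {x | ψ x = i} \ ({x | ψ x = i} \ {v}) = {v} :=
    sdiff_sdiff_cancel_left (singleton_subset_iff.2 hv)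
  have hsingle : (G.induce {v}).Connected := by
    rw [induce_singleton_eq_top]
    exact connected_top
  refine ⟨_, hψ.reassign hic sdiff_subset (by rwa [hrest]) hconn huw.symm hw ⟨hu, Ne.symm hvu⟩,
    fun x hx => ?_, v, by rw [fiber_reassign_of_ne _ _ hic, hrest]⟩
  obtain ⟨hxT, hxc⟩ := mem_of_reassign_ne hx
  exact ⟨hxT.1 ▸ hi, mem_of_eq_of_mem hxc hc⟩

lemma IsContraction.exists_not_nontrivial_fibers [Finite V] [Finite W] [Nontrivial W]
    {G : SimpleGraph V} (hG : G.Connected) {ψ : V → W} (hψ : IsContraction G ψ) {C I : Set W}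
    (hs : IsSplitPartition (quotientGraph G ψ) C I) :
    ∃ ψ' : V → W, IsContraction G ψ' ∧ IsSplitPartition (quotientGraph G ψ') C I ∧
      ∀ i ∈ I, ¬ {x | ψ' x = i}.Nontrivial := by
  induction hn : {i ∈ I | {x | ψ x = i}.Nontrivial}.ncard using Nat.strong_induction_on
    generalizing ψ with
  | _ n ih =>
  by_cases h : ∃ i ∈ I, {x | ψ x = i}.Nontrivial
  swap
  · exact ⟨ψ, hψ, hs, fun i hi hnt => h ⟨i, hi, hnt⟩⟩
  obtain ⟨i, hi, hnt⟩ := h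
  obtain ⟨ψ', hψ', hmove, v, hv⟩ := hψ.exists_fiber_eq_singleton hG hs hi hnt
  have hfiber {j} (hj : j ∈ I) : {x | ψ' x = j} ⊆ {x | ψ x = j} := fun x hx => by
    by_contra hne
    have hxI : ψ' x ∈ I := mem_of_eq_of_mem hx hj
    exact hs.disjoint.ne_of_mem (hmove x fun h => hne (h.symm.trans hx)).2 hxI rfl
  have hsub : {j ∈ I | {x | ψ' x = j}.Nontrivial} ⊆ {j ∈ I | {x | ψ x = j}.Nontrivial} :=
    fun j hj => ⟨hj.1, hj.2.mono (hfiber hj.1)⟩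
  have hlt : {j ∈ I | {x | ψ' x = j}.Nontrivial} ⊂ {j ∈ I | {x | ψ x = j}.Nontrivial} :=
    (ssubset_iff_of_subset hsub).2
      ⟨i, ⟨hi, hnt⟩, fun ⟨_, hnt'⟩ => (hv ▸ hnt').not_subsingleton subsingleton_singleton⟩
  exact ih _ (hn ▸ ncard_lt_ncard hlt) hψ' (hs.quotientGraph_of_forall_ne hmove) rfl

lemma IsContraction.exists_isSplitPartition_ncard_eq_one [Finite V] [Finite W]
    {G : SimpleGraph V} (hG : G.Connected) {ψ : V → W} (hψ : IsContraction G ψ) {C I : Set W}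
    (hs : IsSplitPartition (quotientGraph G ψ) C I) :
    ∃ (ψ' : V → W) (C' I' : Set W), IsContraction G ψ' ∧
      IsSplitPartition (quotientGraph G ψ') C' I' ∧ ∀ i ∈ I', {x | ψ' x = i}.ncard = 1 := by
  cases subsingleton_or_nontrivial W
  · refine ⟨ψ, univ, ∅, hψ, ⟨union_empty _, disjoint_empty _, ?_, by simp⟩, by simp⟩
    exact fun u _ w _ huw => absurd (Subsingleton.elim u w) huw
  obtain ⟨ψ', hψ', hs', htriv⟩ := hψ.exists_not_nontrivial_fibers hG hs
  refine ⟨ψ', C, I, hψ', hs', fun i hi => ncard_eq_one.2 ?_⟩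
  obtain ⟨⟨v, hv⟩⟩ := (hψ' i).nonempty
  exact ⟨v, (not_nontrivial_iff.1 (htriv i hi)).eq_singleton_of_mem hv⟩

section reindex

variable {W' : Type*} (e : W ≃ W') (ψ : V → W)

lemma fiber_equiv_comp (h : W') : {x | (e ∘ ψ) x = h} = {x | ψ x = e.symm h} := by
  ext x
  simp [Equiv.eq_symm_apply]

lemma quotientGraph_equiv_comp (G : SimpleGraph V) :
    quotientGraph G (e ∘ ψ) = (quotientGraph G ψ).comap e.symm := by
  ext h h'
  simp [quotientGraph_adj, Equiv.eq_symm_apply]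

end reindex

lemma IsSplitPartition.comap {W' : Type*} {H : SimpleGraph W} {C I : Set W}
    (hs : IsSplitPartition H C I) {f : W' → W} (hf : Injective f) :
    IsSplitPartition (H.comap f) (f ⁻¹' C) (f ⁻¹' I) := by
  obtain ⟨hcov, hdisj, hclique, hindep⟩ := hs
  refine ⟨by rw [← preimage_union, hcov, preimage_univ], hdisj.preimage f,
    fun u hu w hw huw => hclique _ hu _ hw (hf.ne huw), fun u hu w hw => hindep _ hu _ hw⟩

end contraction

/-- If a connected graph `G` is contractible to a split graph `H` with contraction
cost `c`, then `G` is contractible, with contraction cost at most `c`, to a split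
graph `H'` having a split partition `(C, I)` in which every vertex of `I` has a
trivial (singleton) witness set. -/
theorem stmt_5 {V W : Type*} [Fintype V] [Fintype W]
    (G : SimpleGraph V) (hGconn : G.Connected)
    (H : SimpleGraph W) (ψ : V → W) (c : ℕ)
    (hsplit : ∃ C I : Set W, C ∪ I = Set.univ ∧ Disjoint C I ∧
      (∀ u ∈ C, ∀ v ∈ C, u ≠ v → H.Adj u v) ∧
      (∀ u ∈ I, ∀ v ∈ I, ¬ H.Adj u v))
    (hw : IsWitnessStructure G H ψ)
    (hc : ∑ h : W, ({v : V | ψ v = h}.ncard - 1) = c) :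
    ∃ (n : ℕ) (H' : SimpleGraph (Fin n)) (ψ' : V → Fin n) (C I : Set (Fin n)),
      IsWitnessStructure G H' ψ' ∧
      ∑ h : Fin n, ({v : V | ψ' v = h}.ncard - 1) ≤ c ∧
      C ∪ I = Set.univ ∧ Disjoint C I ∧
      (∀ u ∈ C, ∀ v ∈ C, u ≠ v → H'.Adj u v) ∧
      (∀ u ∈ I, ∀ v ∈ I, ¬ H'.Adj u v) ∧
      (∀ i ∈ I, {v : V | ψ' v = i}.ncard = 1) := by
  obtain ⟨C, I, hcov, hdisj, hclique, hindep⟩ := hsplit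
  obtain ⟨hψ, rfl⟩ := isWitnessStructure_iff.1 hw
  obtain ⟨ψ', C', I', hψ', hs', htriv⟩ :=
    hψ.exists_isSplitPartition_ncard_eq_one hGconn ⟨hcov, hdisj, hclique, hindep⟩
  let e := Fintype.equivFin W
  have he : IsContraction G (e ∘ ψ') := fun k => fiber_equiv_comp e ψ' k ▸ hψ' _
  have hcost := contractionCost_add_card hψ.surjective
  have hcost' := contractionCost_add_card he.surjective
  rw [Fintype.card_fin] at hcost'
  obtain ⟨hcov', hdisj', hclique', hindep'⟩ :=
    quotientGraph_equiv_comp e ψ' G ▸ hs'.comap e.symm.injective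
  refine ⟨_, _, e ∘ ψ', e.symm ⁻¹' C', e.symm ⁻¹' I', isWitnessStructure_iff.2 ⟨he, rfl⟩,
    ?_, hcov', hdisj', hclique', hindep', fun k hk => fiber_equiv_comp e ψ' k ▸ htriv _ hk⟩
  change contractionCost _ ≤ c
  change contractionCost ψ = c at hc
  omega
end

section
/- Let G be a connected graph and (X, Y) a partition of V(G) such that Y induces a clique in G. Let Y' ⊆ Y be such that every vertex of X that has a neighbor in Y also has a neighbor in Y'. Then for every subset Y'' ⊆ Y \ Y' with Y'' ≠ V(G), the induced subgraph G − Y'' is connected. -/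
/-!
Every vertex outside `Y''` is joined to the surviving part `Y \ Y''` of the clique by a path
avoiding `Y''`: follow any path of `G` towards `Y \ Y''` and stop just before it first enters
`Y''`. The vertex reached there lies in `Y \ Y''` or in `X`, and in the latter case it has a
neighbour in `Y' ⊆ Y \ Y''`. Since `Y \ Y''` is a clique, `G - Y''` is connected. If nothing of
`Y''` has a neighbour outside it, the same argument applies with any target vertex.
-/

namespace SimpleGraph

variable {V : Type*} {G : SimpleGraph V} {S : Set V}

theorem Walk.reachable_induce_compl {u c : V} (p : G.Walk u c) (hu : u ∉ S) (hc : c ∉ S)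
    (hbdry : ∀ x : ↥Sᶜ, (∃ w ∈ S, G.Adj x w) → (G.induce Sᶜ).Reachable x ⟨c, hc⟩) :
    (G.induce Sᶜ).Reachable ⟨u, hu⟩ ⟨c, hc⟩ := by
  induction p with
  | nil => rfl
  | @cons u w c huw p ih =>
    by_cases hw : w ∈ S
    · exact hbdry ⟨u, hu⟩ ⟨w, hw, huw⟩
    · have huw' : (G.induce Sᶜ).Adj ⟨u, hu⟩ ⟨w, hw⟩ := huw
      exact huw'.reachable.trans (ih hw hc hbdry)

theorem Connected.induce_compl (hG : G.Connected) (hS : Sᶜ.Nonempty)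
    (hbdry : ∀ x y : ↥Sᶜ, (∃ w ∈ S, G.Adj x w) → (∃ w ∈ S, G.Adj y w) →
      (G.induce Sᶜ).Reachable x y) :
    (G.induce Sᶜ).Connected := by
  obtain ⟨c, hc⟩ : ∃ c : ↥Sᶜ, ∀ x : ↥Sᶜ, (∃ w ∈ S, G.Adj x w) →
      (G.induce Sᶜ).Reachable x c := by
    by_cases hb : ∃ c : ↥Sᶜ, ∃ w ∈ S, G.Adj c w
    · obtain ⟨c, hc⟩ := hb
      exact ⟨c, fun x hx => hbdry x c hx hc⟩
    · exact ⟨⟨hS.some, hS.some_mem⟩, fun x hx => absurd ⟨x, hx⟩ hb⟩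
  have hreach (x : ↥Sᶜ) : (G.induce Sᶜ).Reachable x c :=
    (hG.preconnected x c).elim fun p => p.reachable_induce_compl x.2 c.2 hc
  exact (connected_iff_exists_forall_reachable _).mpr ⟨c, fun x => (hreach x).symm⟩

theorem Connected.induce_compl_of_isClique (hG : G.Connected) (hS : Sᶜ.Nonempty) {C : Set V}
    (hC : G.IsClique C) (hCS : Disjoint C S)
    (hbdry : ∀ x ∉ S, (∃ w ∈ S, G.Adj x w) → x ∈ C ∨ ∃ t ∈ C, G.Adj x t) :
    (G.induce Sᶜ).Connected := by
  have hCreach (a b : ↥Sᶜ) (ha : ↑a ∈ C) (hb : ↑b ∈ C) : (G.induce Sᶜ).Reachable a b := by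
    by_cases hab : a = b
    · rw [hab]
    · exact Adj.reachable (hC ha hb (Subtype.coe_ne_coe.mpr hab))
  have hnear (x : ↥Sᶜ) (hx : ∃ w ∈ S, G.Adj x w) :
      ∃ t : ↥Sᶜ, ↑t ∈ C ∧ (G.induce Sᶜ).Reachable x t := by
    rcases hbdry x x.2 hx with hxC | ⟨t, htC, hxt⟩
    · exact ⟨x, hxC, .refl x⟩
    · exact ⟨⟨t, hCS.notMem_of_mem_left htC⟩, htC, Adj.reachable hxt⟩
  refine hG.induce_compl hS fun x y hx hy => ?_
  obtain ⟨t, htC, hxt⟩ := hnear x hx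
  obtain ⟨t', ht'C, hyt'⟩ := hnear y hy
  exact hxt.trans ((hCreach t t' htC ht'C).trans hyt'.symm)

end SimpleGraph

theorem stmt_6_general {V : Type*} (G : SimpleGraph V) (hconn : G.Connected)
    (X Y : Set V) (hunion : X ∪ Y = Set.univ)
    (hclique : ∀ u ∈ Y, ∀ v ∈ Y, u ≠ v → G.Adj u v)
    (Y' : Set V) (hY'sub : Y' ⊆ Y)
    (hmark : ∀ x ∈ X, (∃ y ∈ Y, G.Adj x y) → ∃ y' ∈ Y', G.Adj x y')
    (Y'' : Set V) (hY''sub : Y'' ⊆ Y \ Y') (hY''ne : Y'' ≠ Set.univ) :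
    (G.induce (Y''ᶜ)).Connected := by
  refine hconn.induce_compl_of_isClique (Set.nonempty_compl.mpr hY''ne) (C := Y \ Y'')
    (fun u hu v hv huv => hclique u hu.1 v hv.1 huv) Set.disjoint_sdiff_left ?_
  rintro x hx ⟨w, hw, hxw⟩
  by_cases hxY : x ∈ Y
  · exact Or.inl ⟨hxY, hx⟩
  have hxX : x ∈ X := (hunion ▸ Set.mem_univ x : x ∈ X ∪ Y).resolve_right hxY
  obtain ⟨y', hy', hxy'⟩ := hmark x hxX ⟨w, (hY''sub hw).1, hxw⟩
  exact Or.inr ⟨y', ⟨hY'sub hy', fun h => (hY''sub h).2 hy'⟩, hxy'⟩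

/-- Let `G` be connected, `(X, Y)` a partition of its vertex set with `Y` a clique, and
`Y' ⊆ Y` such that every vertex of `X` with a neighbor in `Y` also has a neighbor in `Y'`.
Then deleting any set `Y'' ⊆ Y \ Y'` (with `Y''` not all of `V(G)`) leaves `G` connected. -/
theorem stmt_6 {V : Type*} [Fintype V] (G : SimpleGraph V) (hconn : G.Connected)
    (X Y : Set V) (hunion : X ∪ Y = Set.univ) (hdisj : Disjoint X Y)
    (hclique : ∀ u ∈ Y, ∀ v ∈ Y, u ≠ v → G.Adj u v)
    (Y' : Set V) (hY'sub : Y' ⊆ Y)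
    (hmark : ∀ x ∈ X, (∃ y ∈ Y, G.Adj x y) → ∃ y' ∈ Y', G.Adj x y')
    (Y'' : Set V) (hY''sub : Y'' ⊆ Y \ Y') (hY''ne : Y'' ≠ Set.univ) :
    (G.induce (Y''ᶜ)).Connected :=
  stmt_6_general G hconn X Y hunion hclique Y' hY'sub hmark Y'' hY''sub hY''ne
end

section
/- Let G be a connected graph, (X, Y) a partition of V(G) such that Y induces a clique in G, let d ≥ 1 and k ≥ 1 be integers, let Y' ⊆ Y be (d,k)-marked, and let G' = G[X ∪ Y']. If G' is contractible to a complete graph with contraction cost c ≤ k, then G is contractible to a complete graph with contraction cost c* satisfying d·c* ≤ (d+1)·c. -/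
/-!
Keep every vertex of `Y \ Y'` as a singleton witness set. These singletons are pairwise
adjacent, and adjacent to every witness set of `G[X ∪ Y']` that meets `Y'`, since `Y` is a clique.
The only witness sets that can fail are the stranded ones: contained in `X` and missed by some
`y ∈ Y \ Y'`. They are merged into a witness set containing a vertex of `Y'`, at an extra cost
of one each.

A stranded witness set `A` has more than `d` vertices. Otherwise (M2) gives `2k + 1` vertices
of `Y'` with no neighbour in `A`; the witness set of each of them must still touch `A`, so it is
not a singleton, yet non-singleton witness sets cover at most `2c ≤ 2k` vertices. Hence there
are at most `c / d` stranded sets, and `d c* = d (c + #stranded) ≤ (d + 1) c`.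
-/

/-- `G` is contractible to a complete graph with contraction cost `c`: there is a
surjection `ψ` onto the vertex set of a complete graph whose witness sets are connected,
with an edge of `G` between any two distinct witness sets, and total cost
`Σ_h (|W(h)| − 1) = c`. -/
def ContractsToCompleteWithCost {α : Type*} (G : SimpleGraph α) (c : ℕ) : Prop :=
  ∃ (n : ℕ) (ψ : α → Fin n),
    Function.Surjective ψ ∧
    (∀ h : Fin n, (G.induce {v | ψ v = h}).Connected) ∧
    (∀ h h' : Fin n, h ≠ h' → ∃ u v : α, G.Adj u v ∧ ψ u = h ∧ ψ v = h') ∧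
    ∑ h : Fin n, ({v | ψ v = h}.ncard - 1) = c

/-- `Y' ⊆ Y` is `(d, k)`-marked with respect to the partition `(X, Y)`:
(M1) every subset `A ⊆ X` with `|A| ≤ d` having a common neighbor in `Y` has a common
neighbor in `Y'`; (M2) if some `y ∈ Y \ Y'` has no neighbor in a set `A ⊆ X` with
`|A| ≤ d`, then at least `2k + 1` vertices of `Y'` have no neighbor in `A`. -/
def IsMarked {V : Type*} (G : SimpleGraph V) (X Y Y' : Set V) (d k : ℕ) : Prop :=
  Y' ⊆ Y ∧
  (∀ A : Set V, A ⊆ X → A.ncard ≤ d →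
    (∃ y ∈ Y, A ⊆ G.neighborSet y) → ∃ y' ∈ Y', A ⊆ G.neighborSet y') ∧
  (∀ A : Set V, A ⊆ X → A.ncard ≤ d →
    (∃ y ∈ Y \ Y', G.neighborSet y ∩ A = ∅) →
    2 * k + 1 ≤ {y' ∈ Y' | G.neighborSet y' ∩ A = ∅}.ncard)

open SimpleGraph Set Function

namespace SimpleGraph

variable {V ι : Type*} {G : SimpleGraph V}

lemma connected_induce_image_val {S : Set V} {T : Set S} (h : ((G.induce S).induce T).Connected) :
    (G.induce (((↑) : S → V) '' T)).Connected :=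
  h.map ⟨fun x => ⟨x.1.1, x.1, x.2, rfl⟩, fun hxy => hxy⟩
    (by rintro ⟨_, x, hx, rfl⟩; exact ⟨⟨x, hx⟩, rfl⟩)

lemma connected_induce_biUnion_of_adj {s : Set ι} {t : ι → Set V} (hs : s.Nonempty)
    (hconn : ∀ i ∈ s, (G.induce (t i)).Connected)
    (hadj : ∀ i ∈ s, ∀ j ∈ s, i ≠ j → ∃ u ∈ t i, ∃ v ∈ t j, G.Adj u v) :
    (G.induce (⋃ i ∈ s, t i)).Connected := by
  obtain ⟨i, hi⟩ := hs
  obtain ⟨⟨u, hu⟩⟩ := (hconn i hi).nonempty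
  refine G.induce_connected_of_patches u (mem_biUnion hi hu) fun {v} hv => ?_
  obtain ⟨j, hj, hvj⟩ := mem_iUnion₂.mp hv
  obtain rfl | hij := eq_or_ne i j
  · exact ⟨t i, subset_biUnion_of_mem hi, hu, hvj, (hconn i hi).preconnected _ _⟩
  · obtain ⟨a, ha, b, hb, hab⟩ := hadj i hi j hj hij
    have := connected_induce_union (hconn i hi).preconnected (hconn j hj).preconnected ha hb hab
    exact ⟨t i ∪ t j, union_subset (subset_biUnion_of_mem hi) (subset_biUnion_of_mem hj),
      .inl hu, .inr hvj, this.preconnected _ _⟩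

end SimpleGraph

lemma ncard_nonsingleton_fiber_le {V β : Type*} [Finite V] [Fintype β] (ψ : V → β) :
    {v | ∃ w ≠ v, ψ w = ψ v}.ncard ≤ 2 * ∑ b, ({v | ψ v = b}.ncard - 1) := by
  set N := {v | ∃ w ≠ v, ψ w = ψ v}
  have hfiber (b : β) : (N ∩ {v | ψ v = b}).ncard ≤ 2 * ({v | ψ v = b}.ncard - 1) := by
    rcases (N ∩ {v | ψ v = b}).eq_empty_or_nonempty with h | ⟨v, ⟨w, hwv, hw⟩, hv⟩
    · simp [h]
    · have h2 : 1 < {v | ψ v = b}.ncard :=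
        (one_lt_ncard_iff (toFinite _)).mpr ⟨w, v, hw.trans hv, hv, hwv⟩
      have := ncard_le_ncard (inter_subset_right (s := N)) (toFinite {v | ψ v = b})
      omega
  calc N.ncard ≤ (⋃ b, N ∩ {v | ψ v = b}).ncard :=
        ncard_le_ncard (fun v hv => mem_iUnion.mpr ⟨ψ v, hv, rfl⟩) (toFinite _)
    _ ≤ ∑ b, (N ∩ {v | ψ v = b}).ncard := ncard_iUnion_le_of_fintype _
    _ ≤ ∑ b, 2 * ({v | ψ v = b}.ncard - 1) := Finset.sum_le_sum fun b _ => hfiber b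
    _ = 2 * ∑ b, ({v | ψ v = b}.ncard - 1) := (Finset.mul_sum ..).symm

lemma sum_ncard_fiber_sub_one_add_card {V β : Type*} [Finite V] [Fintype β] {ψ : V → β}
    (hψ : Surjective ψ) :
    ∑ b, ({v | ψ v = b}.ncard - 1) + Nat.card β = Nat.card V := by
  have hfibers : ∑ b, {v | ψ v = b}.ncard = Nat.card V := by
    have hcover : (⋃ b, {v | ψ v = b}) = univ :=
      eq_univ_of_forall fun v => mem_iUnion.mpr ⟨_, rfl⟩
    rw [← ncard_univ, ← finsum_eq_sum_of_fintype, ← hcover,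
      ncard_iUnion_of_finite (fun _ => toFinite _)]
    exact fun b b' hbb' => disjoint_left.mpr fun v hb hb' => hbb' (hb.symm.trans hb')
  rw [Nat.card_eq_fintype_card, Fintype.card_eq_sum_ones, ← Finset.sum_add_distrib, ← hfibers]
  refine Finset.sum_congr rfl fun b _ => Nat.sub_add_cancel ?_
  obtain ⟨v, rfl⟩ := hψ b
  exact (ncard_pos (toFinite _)).mpr ⟨v, rfl⟩

structure IsCompleteContraction {V β : Type*} (G : SimpleGraph V) (ψ : V → β) : Prop where
  surjective : Surjective ψ
  connected_fiber : ∀ b, (G.induce {v | ψ v = b}).Connected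
  exists_adj : ∀ b b', b ≠ b' → ∃ u v, G.Adj u v ∧ ψ u = b ∧ ψ v = b'

namespace IsCompleteContraction

variable {V β γ : Type*} {G : SimpleGraph V} {ψ : V → β}

lemma comp (hψ : IsCompleteContraction G ψ) {r : β → γ} (hr : Surjective r) :
    IsCompleteContraction G (r ∘ ψ) where
  surjective := hr.comp hψ.surjective
  connected_fiber c := by
    have hfiber : {v | (r ∘ ψ) v = c} = ⋃ b ∈ r ⁻¹' {c}, {v | ψ v = b} := by ext; simp
    rw [hfiber]
    refine connected_induce_biUnion_of_adj (hr c) (fun b _ => hψ.connected_fiber b) ?_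
    intro b _ b' _ hbb'
    obtain ⟨u, v, huv, rfl, rfl⟩ := hψ.exists_adj b b' hbb'
    exact ⟨u, rfl, v, rfl, huv⟩
  exists_adj c c' hcc' := by
    obtain ⟨b, rfl⟩ := hr c
    obtain ⟨b', rfl⟩ := hr c'
    obtain ⟨u, v, huv, rfl, rfl⟩ := hψ.exists_adj b b' (ne_of_apply_ne r hcc')
    exact ⟨u, v, huv, rfl, rfl⟩

lemma contractsToCompleteWithCost [Finite V] [Finite β] (hψ : IsCompleteContraction G ψ) :
    ContractsToCompleteWithCost G (Nat.card V - Nat.card β) := by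
  have := Fintype.ofFinite β
  let e := Fintype.equivFin β
  have he := hψ.comp e.surjective
  refine ⟨_, e ∘ ψ, he.surjective, he.connected_fiber, he.exists_adj, ?_⟩
  have := sum_ncard_fiber_sub_one_add_card he.surjective
  rw [Nat.card_eq_fintype_card (α := β)]
  simp only [Nat.card_eq_fintype_card, Fintype.card_fin] at this
  omega

lemma ncard_not_adj_fiber_le [Finite V] [Fintype β] (hψ : IsCompleteContraction G ψ) (b : β) :
    {y | ψ y ≠ b ∧ ∀ w, ψ w = b → ¬ G.Adj y w}.ncard ≤
      2 * ∑ b', ({v | ψ v = b'}.ncard - 1) := by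
  refine le_trans (ncard_le_ncard ?_ (toFinite _)) (ncard_nonsingleton_fiber_le ψ)
  rintro y ⟨hyb, hy⟩
  obtain ⟨u, v, huv, hu, hv⟩ := hψ.exists_adj (ψ y) b hyb
  exact ⟨u, fun hyu => hy v hv (hyu ▸ huv), hu⟩

end IsCompleteContraction

section ExtendByCompl

variable {V β : Type*} {S : Set V} [DecidablePred (· ∈ S)]

def extendByCompl (ψ : S → β) (v : V) : β ⊕ ↥Sᶜ :=
  if h : v ∈ S then .inl (ψ ⟨v, h⟩) else .inr ⟨v, h⟩

lemma extendByCompl_of_mem (ψ : S → β) {v : V} (hv : v ∈ S) :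
    extendByCompl ψ v = .inl (ψ ⟨v, hv⟩) := dif_pos hv

lemma extendByCompl_of_notMem (ψ : S → β) {v : V} (hv : v ∉ S) :
    extendByCompl ψ v = .inr ⟨v, hv⟩ := dif_neg hv

lemma setOf_extendByCompl_eq_inl (ψ : S → β) (b : β) :
    {v | extendByCompl ψ v = .inl b} = (↑) '' {w | ψ w = b} := by
  ext v
  by_cases hv : v ∈ S
  · simp [extendByCompl_of_mem ψ hv, hv]
  · simp only [mem_ofPred_eq, extendByCompl_of_notMem ψ hv, reduceCtorEq, false_iff]
    rintro ⟨w, -, rfl⟩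
    exact hv w.2

lemma setOf_extendByCompl_eq_inr (ψ : S → β) (o : ↥Sᶜ) :
    {v | extendByCompl ψ v = .inr o} = {(o : V)} := by
  ext v
  by_cases hv : v ∈ S
  · simp only [mem_ofPred_eq, extendByCompl_of_mem ψ hv, reduceCtorEq, false_iff,
      mem_singleton_iff]
    rintro rfl
    exact o.2 hv
  · simp [extendByCompl_of_notMem ψ hv, Subtype.ext_iff]

variable {G : SimpleGraph V}

lemma IsCompleteContraction.extendByCompl {ψ : S → β}
    (hψ : IsCompleteContraction (G.induce S) ψ) (hclique : G.IsClique Sᶜ)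
    (hdom : ∀ y ∉ S, ∀ b, ∃ w : S, ψ w = b ∧ G.Adj w y) :
    IsCompleteContraction G (extendByCompl ψ) where
  surjective := by
    rintro (b | o)
    · obtain ⟨w, rfl⟩ := hψ.surjective b
      exact ⟨w, extendByCompl_of_mem ψ w.2⟩
    · exact ⟨o, extendByCompl_of_notMem ψ o.2⟩
  connected_fiber := by
    rintro (b | o)
    · rw [setOf_extendByCompl_eq_inl]
      exact connected_induce_image_val (hψ.connected_fiber b)
    · rw [setOf_extendByCompl_eq_inr, induce_singleton_eq_top]
      exact connected_top
  exists_adj := by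
    rintro (b | o) (b' | o') hne
    · obtain ⟨u, v, huv, rfl, rfl⟩ := hψ.exists_adj b b' (by rintro rfl; exact hne rfl)
      exact ⟨u, v, huv, extendByCompl_of_mem ψ u.2, extendByCompl_of_mem ψ v.2⟩
    · obtain ⟨w, rfl, hw⟩ := hdom o' o'.2 b
      exact ⟨w, o', hw, extendByCompl_of_mem ψ w.2, extendByCompl_of_notMem ψ o'.2⟩
    · obtain ⟨w, rfl, hw⟩ := hdom o o.2 b'
      exact ⟨o, w, hw.symm, extendByCompl_of_notMem ψ o.2, extendByCompl_of_mem ψ w.2⟩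
    · have hoo' : (o : V) ≠ o' := fun h => hne (congrArg _ (Subtype.ext h))
      exact ⟨o, o', hclique o.2 o'.2 hoo', extendByCompl_of_notMem ψ o.2,
        extendByCompl_of_notMem ψ o'.2⟩

end ExtendByCompl

lemma Finset.exists_retraction_compl {β : Type*} (B : Finset β)
    (hB : B.Nonempty → ∃ b₀, b₀ ∉ B) :
    ∃ r : β → {b // b ∉ B}, ∀ b (hb : b ∉ B), r b = ⟨b, hb⟩ := by
  classical
  rcases B.eq_empty_or_nonempty with rfl | hne
  · exact ⟨fun b => ⟨b, Finset.notMem_empty b⟩, fun _ _ => rfl⟩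
  · obtain ⟨b₀, hb₀⟩ := hB hne
    exact ⟨fun b => if hb : b ∈ B then ⟨b₀, hb₀⟩ else ⟨b, hb⟩,
      fun b hb => dif_neg hb⟩

/-- Merging the witness sets indexed by `B` into one outside `B`, and then adding every vertex
outside `S` as a singleton, costs `#B` more than the contraction of `G[S]`. -/
lemma IsCompleteContraction.contractsToCompleteWithCost_of_induce {V β : Type*} [Finite V]
    [Fintype β] {G : SimpleGraph V} {S : Set V} {ψ : S → β}
    (hψ : IsCompleteContraction (G.induce S) ψ) (hclique : G.IsClique Sᶜ) (B : Finset β)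
    (hB : B.Nonempty → ∃ b, b ∉ B)
    (hdom : ∀ y ∉ S, ∀ b ∉ B, ∃ w : S, ψ w = b ∧ G.Adj w y) :
    ContractsToCompleteWithCost G (Nat.card S - Nat.card β + B.card) := by
  classical
  obtain ⟨r, hr⟩ := B.exists_retraction_compl hB
  have hdom' (y) (hy : y ∉ S) (g : {b // b ∉ B}) : ∃ w, (r ∘ ψ) w = g ∧ G.Adj w y :=
    let ⟨w, hw, hwy⟩ := hdom y hy g g.2
    ⟨w, by rw [comp_apply, hw, hr g g.2], hwy⟩
  have hΨ := (hψ.comp fun g => ⟨g.1, hr g.1 g.2⟩).extendByCompl hclique hdom'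
  convert hΨ.contractsToCompleteWithCost using 1
  have hcardS : Nat.card S + Nat.card ↥Sᶜ = Nat.card V := by
    rw [Nat.card_coe_set_eq, Nat.card_coe_set_eq, ncard_add_ncard_compl]
  have hcardB : Nat.card {b // b ∉ B} + B.card = Nat.card β := by
    rw [Nat.card_eq_fintype_card, Fintype.card_subtype_compl, Fintype.card_coe,
      Nat.card_eq_fintype_card]
    exact Nat.sub_add_cancel (Finset.card_le_univ B)
  have hβ : Nat.card β ≤ Nat.card S := Nat.card_le_card_of_surjective ψ hψ.surjective
  rw [Nat.card_sum]
  omega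

section Marked

variable {V : Type*} {G : SimpleGraph V} {X Y Y' : Set V}

def IsStranded (G : SimpleGraph V) (X Z A : Set V) : Prop :=
  A ⊆ X ∧ ∃ y ∈ Z, G.neighborSet y ∩ A = ∅

lemma exists_mem_adj_of_not_isStranded (hY'Y : Y' ⊆ Y)
    (hclique : ∀ u ∈ Y, ∀ v ∈ Y, u ≠ v → G.Adj u v) {A : Set V} (hA : A ⊆ X ∪ Y')
    (hA' : ¬ IsStranded G X (Y \ Y') A) {y : V} (hy : y ∈ Y \ Y') :
    ∃ w ∈ A, G.Adj w y := by
  by_cases hAX : A ⊆ X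
  · obtain ⟨w, hyw, hwA⟩ := nonempty_iff_ne_empty.mpr fun h => hA' ⟨hAX, y, hy, h⟩
    exact ⟨w, hwA, hyw.symm⟩
  · obtain ⟨w, hwA, hwX⟩ := not_subset.mp hAX
    have hwY' : w ∈ Y' := (hA hwA).resolve_left hwX
    exact ⟨w, hwA, hclique w (hY'Y hwY') y hy.1 (by rintro rfl; exact hy.2 hwY')⟩

namespace IsMarked

variable {d k : ℕ}

lemma nonempty_of_nonempty_diff (hmark : IsMarked G X Y Y' d k) (h : (Y \ Y').Nonempty) :
    Y'.Nonempty := by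
  obtain ⟨y, hy⟩ := h
  have := hmark.2.2 ∅ (empty_subset X) (by simp) ⟨y, hy, inter_empty _⟩
  simp only [inter_empty, sep_true] at this
  exact nonempty_of_ncard_ne_zero (by omega)

variable [Finite V] {β : Type*} [Fintype β] {ψ : ↥(X ∪ Y') → β}

lemma lt_ncard_of_isStranded (hmark : IsMarked G X Y Y' d k) (hXY' : Disjoint X Y')
    (hψ : IsCompleteContraction (G.induce (X ∪ Y')) ψ)
    (hcost : ∑ b, ({v | ψ v = b}.ncard - 1) ≤ k) {b : β}
    (hb : IsStranded G X (Y \ Y') ((↑) '' {w | ψ w = b})) :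
    d < ((↑) '' {w | ψ w = b} : Set V).ncard := by
  by_contra! hle
  have hmany := hmark.2.2 _ hb.1 hle hb.2
  have hsub : {y' ∈ Y' | G.neighborSet y' ∩ (↑) '' {w | ψ w = b} = ∅} ⊆
      (↑) '' {y | ψ y ≠ b ∧ ∀ w, ψ w = b → ¬ (G.induce (X ∪ Y')).Adj y w} := by
    rintro y ⟨hyY', hy⟩
    refine ⟨⟨y, .inr hyY'⟩, ⟨fun hyb => ?_, fun w hw hyw => ?_⟩, rfl⟩
    · exact hXY'.notMem_of_mem_right hyY' (hb.1 ⟨_, hyb, rfl⟩)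
    · exact (eq_empty_iff_forall_notMem.mp hy) w ⟨hyw, w, hw, rfl⟩
  have hfew := (ncard_le_ncard hsub (toFinite _)).trans
    ((ncard_image_le (toFinite _)).trans (hψ.ncard_not_adj_fiber_le b))
  omega

lemma mul_card_le_of_isStranded (hmark : IsMarked G X Y Y' d k) (hXY' : Disjoint X Y')
    (hψ : IsCompleteContraction (G.induce (X ∪ Y')) ψ)
    (hcost : ∑ b, ({v | ψ v = b}.ncard - 1) ≤ k) (B : Finset β)
    (hB : ∀ b ∈ B, IsStranded G X (Y \ Y') ((↑) '' {w | ψ w = b})) :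
    d * B.card ≤ ∑ b, ({v | ψ v = b}.ncard - 1) :=
  calc d * B.card = ∑ _b ∈ B, d := by rw [Finset.sum_const, smul_eq_mul, mul_comm]
    _ ≤ ∑ b ∈ B, ({w | ψ w = b}.ncard - 1) := Finset.sum_le_sum fun b hb => by
        have := hmark.lt_ncard_of_isStranded hXY' hψ hcost (hB b hb)
        rw [ncard_image_of_injective _ Subtype.val_injective] at this
        omega
    _ ≤ ∑ b, ({v | ψ v = b}.ncard - 1) := Finset.sum_le_sum_of_subset (Finset.subset_univ _)

end IsMarked

end Marked

theorem stmt_7_general {V : Type*} [Fintype V] (G : SimpleGraph V)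
    (X Y : Set V) (hunion : X ∪ Y = Set.univ) (hdisj : Disjoint X Y)
    (hclique : ∀ u ∈ Y, ∀ v ∈ Y, u ≠ v → G.Adj u v)
    (d k : ℕ)
    (Y' : Set V) (hmark : IsMarked G X Y Y' d k)
    (c : ℕ) (hck : c ≤ k)
    (hG' : ContractsToCompleteWithCost (G.induce (X ∪ Y')) c) :
    ∃ cStar : ℕ, ContractsToCompleteWithCost G cStar ∧ d * cStar ≤ (d + 1) * c := by
  classical
  obtain ⟨n, ψ, hsurj, hconn, hadj, rfl⟩ := hG'
  have hψ : IsCompleteContraction (G.induce (X ∪ Y')) ψ := ⟨hsurj, hconn, hadj⟩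
  have hXY' : Disjoint X Y' := hdisj.mono_right hmark.1
  have hout : ∀ y ∉ X ∪ Y', y ∈ Y \ Y' := fun y hy =>
    ⟨(hunion ▸ mem_univ y : y ∈ X ∪ Y).resolve_left fun h => hy (.inl h),
      fun h => hy (.inr h)⟩
  set B := Finset.univ.filter fun h => IsStranded G X (Y \ Y') ((↑) '' {w | ψ w = h})
  have hB : B.Nonempty → ∃ h, h ∉ B := by
    rintro ⟨h, hh⟩
    obtain ⟨y, hy, -⟩ := ((Finset.mem_filter_univ h).mp hh).2
    obtain ⟨y', hy'⟩ := hmark.nonempty_of_nonempty_diff ⟨y, hy⟩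
    refine ⟨ψ ⟨y', .inr hy'⟩, fun hbad => hXY'.notMem_of_mem_right hy' ?_⟩
    exact ((Finset.mem_filter_univ _).mp hbad).1 ⟨_, rfl, rfl⟩
  have hdom : ∀ y ∉ X ∪ Y', ∀ h ∉ B, ∃ w, ψ w = h ∧ G.Adj w y := fun y hy h hh => by
    obtain ⟨_, ⟨w, hw, rfl⟩, hwy⟩ := exists_mem_adj_of_not_isStranded hmark.1 hclique
      (Subtype.coe_image_subset _ _) (fun h' => hh ((Finset.mem_filter_univ h).mpr h'))
      (hout y hy)
    exact ⟨w, hw, hwy⟩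
  have hcontr := hψ.contractsToCompleteWithCost_of_induce
    (fun u hu v hv huv => hclique u (hout u hu).1 v (hout v hv).1 huv) B hB hdom
  have hdB := hmark.mul_card_le_of_isStranded hXY' hψ hck B fun h hh =>
    (Finset.mem_filter_univ h).mp hh
  have hcard := sum_ncard_fiber_sub_one_add_card hsurj
  refine ⟨_, hcontr, ?_⟩
  rw [← hcard, Nat.card_fin, Nat.add_sub_cancel]
  nlinarith

/-- If `G'` = `G[X ∪ Y']` is contractible to a complete graph with cost `c ≤ k`, then `G`
is contractible to a complete graph with some cost `c*` satisfying `d·c* ≤ (d+1)·c`. -/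
theorem stmt_7 {V : Type*} [Fintype V] (G : SimpleGraph V) (hconn : G.Connected)
    (X Y : Set V) (hunion : X ∪ Y = Set.univ) (hdisj : Disjoint X Y)
    (hclique : ∀ u ∈ Y, ∀ v ∈ Y, u ≠ v → G.Adj u v)
    (d k : ℕ) (hd : 1 ≤ d) (hk : 1 ≤ k)
    (Y' : Set V) (hmark : IsMarked G X Y Y' d k)
    (c : ℕ) (hck : c ≤ k)
    (hG' : ContractsToCompleteWithCost (G.induce (X ∪ Y')) c) :
    ∃ cStar : ℕ, ContractsToCompleteWithCost G cStar ∧ d * cStar ≤ (d + 1) * c :=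
  stmt_7_general G X Y hunion hdisj hclique d k Y' hmark c hck hG'
end

section
/- Let G be a connected graph, (X, Y) a partition of V(G) such that Y induces a clique in G, let d ≥ 1 and k ≥ 1 be integers, let Y' ⊆ Y be (d,k)-marked, and let G' = G[X ∪ Y']. If G is contractible to a complete graph with contraction cost c ≤ k, then G' is contractible to a complete graph with contraction cost at most c. -/
open Function

theorem Function.Surjective.sum_ncard_fiber_sub_one {V : Type*} [Finite V] {n : ℕ}
    {ψ : V → Fin n} (hψ : Surjective ψ) :
    ∑ i, ({v | ψ v = i}.ncard - 1) = Nat.card V - n := by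
  have hpos : ∀ i, 1 ≤ {v | ψ v = i}.ncard := fun i =>
    Nat.one_le_iff_ne_zero.2 ((Set.ncard_pos).2 (hψ i)).ne'
  have hsum : ∑ i, {v | ψ v = i}.ncard = Nat.card V := by
    rw [← finsum_eq_sum_of_fintype, ← Set.ncard_iUnion_of_finite (fun _ => Set.toFinite _)
      (fun i j hij => Set.disjoint_left.2 fun v hi hj => hij (hi.symm.trans hj)),
      Set.iUnion_eq_univ_iff.2 fun v => ⟨ψ v, rfl⟩, Set.ncard_univ]
  rw [Finset.sum_tsub_distrib _ fun i _ => hpos i, hsum]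
  simp

theorem Set.ncard_compl_setOf_fiber_subset_le {V ι : Type*} [Finite V] (ψ : V → ι)
    (s : Set V) :
    {i | {v | ψ v = i} ⊆ s}ᶜ.ncard ≤ sᶜ.ncard := by
  have hcompl : {i | {v | ψ v = i} ⊆ s}ᶜ = ψ '' sᶜ := by
    ext i
    simp [Set.subset_def, and_comm]
  exact hcompl ▸ Set.ncard_image_le

theorem ContractsToCompleteWithCost.of_connected_fibers {V ι : Type*} [Finite V] [Finite ι]
    {G : SimpleGraph V} (ψ : V → ι) (hconn : ∀ i, (G.induce {v | ψ v = i}).Connected)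
    (hadj : ∀ i j, i ≠ j → ∃ u v, G.Adj u v ∧ ψ u = i ∧ ψ v = j) :
    ContractsToCompleteWithCost G (Nat.card V - Nat.card ι) := by
  let e := Finite.equivFin ι
  have hsurj : Surjective (e ∘ ψ) := fun h => by
    obtain ⟨⟨v, hv⟩⟩ := (hconn (e.symm h)).nonempty
    exact ⟨v, by simpa [← Equiv.eq_symm_apply] using hv⟩
  refine ⟨_, e ∘ ψ, hsurj, fun h => ?_, fun h h' hne => ?_, hsurj.sum_ncard_fiber_sub_one⟩
  · have hfib : {v | (e ∘ ψ) v = h} = {v | ψ v = e.symm h} := by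
      ext v; exact (Equiv.eq_symm_apply e).symm
    exact hfib ▸ hconn (e.symm h)
  · obtain ⟨u, v, huv, hu, hv⟩ := hadj (e.symm h) (e.symm h') (by simpa using hne)
    exact ⟨u, v, huv, by simp [hu], by simp [hv]⟩

namespace SimpleGraph

variable {V : Type*} {G : SimpleGraph V}

theorem Connected.contractsToCompleteWithCost [Finite V] (hG : G.Connected) :
    ContractsToCompleteWithCost G (Nat.card V - 1) := by
  simpa using ContractsToCompleteWithCost.of_connected_fibers (G := G) (fun _ => ())
    (fun i => (Set.eq_univ_of_forall fun _ => Subsingleton.elim _ i).symm ▸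
      (induceUnivIso G).connected_iff.2 hG) (by simp)

theorem Connected.induce_insert {S : Set V} (hS : (G.induce S).Connected) {u v : V}
    (hu : u ∈ S) (huv : G.Adj u v) : (G.induce (insert v S)).Connected := by
  have := induce_union_connected (induce_pair_connected_of_adj huv).preconnected
    hS.preconnected ⟨u, by simp, hu⟩
  rwa [Set.insert_union, Set.singleton_union, Set.insert_comm, Set.insert_eq_of_mem hu] at this

theorem Connected.induce_of_subset {s B : Set V} (hB : (G.induce B).Connected) (hBs : B ⊆ s) :
    ((G.induce s).induce {w : s | w.1 ∈ B}).Connected :=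
  hB.map (⟨fun v => ⟨⟨v, hBs v.2⟩, v.2⟩, id⟩ :
      G.induce B →g (G.induce s).induce {w : s | w.1 ∈ B})
    (by rintro ⟨⟨v, -⟩, hv⟩; exact ⟨⟨v, hv⟩, rfl⟩)

theorem connected_induce_fibers_update [DecidableEq V] {ι : Type*} {φ : V → Option ι}
    (hφ : ∀ i, (G.induce {v | φ v = some i}).Connected) {a b : V} {j : ι}
    (ha : φ a = some j) (hb : φ b = none) (hab : G.Adj a b) (i : ι) :
    (G.induce {v | update φ b (some j) v = some i}).Connected := by
  by_cases hij : i = j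
  · subst hij
    have hfib : {v | update φ b (some i) v = some i} = insert b {v | φ v = some i} := by
      ext v; by_cases hv : v = b <;> simp [hv, update_of_ne]
    exact hfib ▸ (hφ i).induce_insert ha hab
  · have hfib : {v | update φ b (some j) v = some i} = {v | φ v = some i} := by
      ext v; by_cases hv : v = b <;> simp [hv, update_of_ne, Ne.symm hij, hb]
    exact hfib ▸ hφ i

theorem Connected.exists_extend_connected_fibers [Finite V] {ι : Type*} [Nonempty ι]
    (hG : G.Connected) (φ : V → Option ι)
    (hφ : ∀ i, (G.induce {v | φ v = some i}).Connected) :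
    ∃ ψ : V → ι, (∀ v i, φ v = some i → ψ v = i) ∧
      ∀ i, (G.induce {v | ψ v = i}).Connected := by
  classical
  obtain ⟨n, hn⟩ : ∃ n, {v | φ v = none}.ncard = n := ⟨_, rfl⟩
  induction n generalizing φ with
  | zero =>
    have hsome : ∀ v, ∃ i, φ v = some i := fun v =>
      Option.ne_none_iff_exists'.1 fun hv => ((Set.ncard_eq_zero (Set.toFinite _)).1 hn).subset hv
    choose ψ hψ using hsome
    refine ⟨ψ, fun v i hv => Option.some_inj.1 ((hψ v).symm.trans hv), fun i => ?_⟩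
    have hfib : {v | ψ v = i} = {v | φ v = some i} := by ext v; simp [hψ v]
    exact hfib ▸ hφ i
  | succ n ih =>
    obtain ⟨v, hv⟩ := Set.nonempty_of_ncard_ne_zero (hn.trans_ne n.succ_ne_zero)
    obtain ⟨⟨u, hu⟩⟩ := (hφ (Classical.arbitrary ι)).nonempty
    obtain ⟨⟨⟨a, b⟩, hab⟩, -, ha, hb⟩ :=
      (hG.preconnected u v).some.exists_boundary_dart {w | φ w ≠ none}
        (by simp_all) (by simpa using hv)
    obtain ⟨j, hj⟩ := Option.ne_none_iff_exists'.1 ha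
    simp only [Set.mem_ofPred_eq, not_not] at hb
    have hnone : {w | update φ b (some j) w = none} = {w | φ w = none} \ {b} := by
      ext w; by_cases hw : w = b <;> simp [hw, update_of_ne]
    have hcard : {w | update φ b (some j) w = none}.ncard = n := by
      rw [hnone, Set.ncard_sdiff_singleton_of_mem (show b ∈ {w | φ w = none} from hb), hn,
        Nat.add_sub_cancel]
    obtain ⟨ψ, hψφ, hψ⟩ := ih _ (connected_induce_fibers_update hφ hj hb hab) hcard
    have hne : ∀ w i, φ w = some i → w ≠ b := by rintro w i hw rfl; simp_all
    exact ⟨ψ, fun w i hw => hψφ w i (by rwa [update_of_ne (hne w i hw)]), hψ⟩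

theorem Connected.induce_of_boundary_clique (hG : G.Connected) {s T : Set V} (hs : s.Nonempty)
    (hTs : T ⊆ s) (hT : G.IsClique T)
    (hbd : ∀ u ∈ s, ∀ v ∉ s, G.Adj u v → ∃ t ∈ T, u = t ∨ G.Adj u t) :
    (G.induce s).Connected := by
  classical
  have hTreach : ∀ t t' : s, t.1 ∈ T → t'.1 ∈ T → (G.induce s).Reachable t t' := by
    intro t t' ht ht'
    by_cases h : t = t'
    · exact h ▸ .rfl
    · exact Adj.reachable (hT ht ht' (Subtype.coe_injective.ne h))
  have hbd' : ∀ (u : s) (v : V), v ∉ s → G.Adj u v →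
      ∃ t : s, t.1 ∈ T ∧ (G.induce s).Reachable u t := by
    intro u v hv huv
    obtain ⟨t, ht, hut | hut⟩ := hbd u u.2 v hv huv
    · exact ⟨u, hut ▸ ht, .rfl⟩
    · exact ⟨⟨t, hTs ht⟩, ht, Adj.reachable hut⟩
  obtain ⟨y₀, hy₀⟩ : ∃ y₀ : s, T.Nonempty → y₀.1 ∈ T := by
    by_cases h : T.Nonempty
    · exact ⟨⟨h.some, hTs h.some_mem⟩, fun _ => h.some_mem⟩
    · exact ⟨⟨hs.some, hs.some_mem⟩, fun h' => absurd h' h⟩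
  -- Walks of `G` are projected to `G[s]` by sending every vertex outside `s` to `y₀ ∈ T`.
  let r : V → s := fun v => if hv : v ∈ s then ⟨v, hv⟩ else y₀
  have hr : ∀ u v, G.Adj u v → (G.induce s).Reachable (r u) (r v) := by
    intro u v huv
    by_cases hu : u ∈ s <;> by_cases hv : v ∈ s <;>
      simp only [r, hu, hv, dite_true, dite_false]
    · exact Adj.reachable huv
    · obtain ⟨t, ht, hut⟩ := hbd' ⟨u, hu⟩ v hv huv
      exact hut.trans (hTreach t y₀ ht (hy₀ ⟨t, ht⟩))
    · obtain ⟨t, ht, hvt⟩ := hbd' ⟨v, hv⟩ u hu huv.symm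
      exact (hvt.trans (hTreach t y₀ ht (hy₀ ⟨t, ht⟩))).symm
    · rfl
  have hwalk : ∀ {a b} (p : G.Walk a b), (G.induce s).Reachable (r a) (r b) := by
    intro a b p
    induction p with
    | nil => rfl
    | cons h _ ih => exact (hr _ _ h).trans ih
  have : Nonempty s := hs.to_subtype
  refine ⟨fun a b => ?_⟩
  simpa [r] using hwalk (hG.preconnected a.1 b.1).some

end SimpleGraph

open SimpleGraph

theorem ContractsToCompleteWithCost.exists_le_of_induce_connected {V : Type*} [Finite V]
    {G : SimpleGraph V} {c : ℕ} (hG : ContractsToCompleteWithCost G c) {s : Set V}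
    (hs : (G.induce s).Connected) : ∃ c' ≤ c, ContractsToCompleteWithCost (G.induce s) c' := by
  classical
  obtain ⟨n, ψ, hsurj, hconn, hadj, rfl⟩ := hG
  set K : Set (Fin n) := {i | {v | ψ v = i} ⊆ s}
  have hn : K.ncard + Kᶜ.ncard = n := by rw [Set.ncard_add_ncard_compl, Nat.card_fin]
  have hKc : Kᶜ.ncard ≤ sᶜ.ncard := Set.ncard_compl_setOf_fiber_subset_le ψ s
  have hV : s.ncard + sᶜ.ncard = Nat.card V := Set.ncard_add_ncard_compl s
  rw [hsurj.sum_ncard_fiber_sub_one]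
  suffices ∃ c', ContractsToCompleteWithCost (G.induce s) c' ∧ c' ≤ s.ncard - K.ncard by
    obtain ⟨c', hc', hc'le⟩ := this
    exact ⟨c', by omega, hc'⟩
  rcases K.eq_empty_or_nonempty with hK | ⟨i₀, hi₀⟩
  · refine ⟨_, hs.contractsToCompleteWithCost, ?_⟩
    simp [hK, Nat.card_coe_set_eq]
  · have : Nonempty K := ⟨⟨i₀, hi₀⟩⟩
    let φ : s → Option K := fun w => if h : ψ w ∈ K then some ⟨ψ w, h⟩ else none
    have hφ : ∀ i : K, {w : s | φ w = some i} = {w : s | w.1 ∈ {v | ψ v = i}} := by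
      rintro ⟨i, hi⟩
      ext w
      by_cases hw : ψ w = i
      · simp [φ, hw, hi]
      · simp [φ, hw]
    obtain ⟨ψ', hψ'φ, hψ'⟩ := hs.exists_extend_connected_fibers φ
      fun i => hφ i ▸ (hconn i).induce_of_subset i.2
    refine ⟨_, ContractsToCompleteWithCost.of_connected_fibers ψ' hψ' ?_, ?_⟩
    · rintro ⟨i, hi⟩ ⟨j, hj⟩ hij
      obtain ⟨u, v, huv, rfl, rfl⟩ := hadj _ _ (by simpa using hij)
      exact ⟨⟨u, hi rfl⟩, ⟨v, hj rfl⟩, huv, hψ'φ _ _ (by simp [φ, hi]),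
        hψ'φ _ _ (by simp [φ, hj])⟩
    · rw [Nat.card_coe_set_eq, Nat.card_coe_set_eq]

theorem stmt_8_general {V : Type*} [Fintype V] (G : SimpleGraph V) (hconn : G.Connected)
    (X Y : Set V) (hunion : X ∪ Y = Set.univ)
    (hclique : ∀ u ∈ Y, ∀ v ∈ Y, u ≠ v → G.Adj u v)
    (d k : ℕ) (hd : 1 ≤ d)
    (Y' : Set V) (hmark : IsMarked G X Y Y' d k)
    (c : ℕ)
    (hG : ContractsToCompleteWithCost G c) :
    ∃ c' : ℕ, c' ≤ c ∧ ContractsToCompleteWithCost (G.induce (X ∪ Y')) c' := by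
  obtain ⟨hY'Y, hcommon, -⟩ := hmark
  have hXY : ∀ v, v ∉ X → v ∈ Y := fun v hv =>
    ((hunion ▸ Set.mem_univ v : v ∈ X ∪ Y)).resolve_left hv
  have hnbr : ∀ x ∈ X, ∀ y ∈ Y, G.Adj x y → ∃ y' ∈ Y', G.Adj x y' := by
    intro x hx y hy hxy
    obtain ⟨y', hy', hxy'⟩ := hcommon {x} (by simpa) (by simpa)
      ⟨y, hy, by simpa using hxy.symm⟩
    exact ⟨y', hy', by simpa [adj_comm] using hxy'⟩
  have hne : (X ∪ Y').Nonempty := by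
    obtain ⟨v⟩ := hconn.nonempty
    by_cases hv : v ∈ X
    · exact ⟨v, .inl hv⟩
    · obtain ⟨y', hy', -⟩ := hcommon ∅ (by simp) (by simp) ⟨v, hXY v hv, by simp⟩
      exact ⟨y', .inr hy'⟩
  refine hG.exists_le_of_induce_connected <| hconn.induce_of_boundary_clique hne
    Set.subset_union_right (IsClique.subset hY'Y hclique) ?_
  rintro u (hu | hu) v hv huv
  · obtain ⟨y', hy', huy'⟩ := hnbr u hu v (hXY v fun h => hv (.inl h)) huv
    exact ⟨y', hy', .inr huy'⟩
  · exact ⟨u, hu, .inl rfl⟩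

/-- If `G` is contractible to a complete graph with contraction cost `c ≤ k`, then so is
the induced subgraph `G' = G[X ∪ Y']`, with contraction cost at most `c`. -/
theorem stmt_8 {V : Type*} [Fintype V] (G : SimpleGraph V) (hconn : G.Connected)
    (X Y : Set V) (hunion : X ∪ Y = Set.univ) (hdisj : Disjoint X Y)
    (hclique : ∀ u ∈ Y, ∀ v ∈ Y, u ≠ v → G.Adj u v)
    (d k : ℕ) (hd : 1 ≤ d) (hk : 1 ≤ k)
    (Y' : Set V) (hmark : IsMarked G X Y Y' d k)
    (c : ℕ) (hck : c ≤ k)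
    (hG : ContractsToCompleteWithCost G c) :
    ∃ c' : ℕ, c' ≤ c ∧ ContractsToCompleteWithCost (G.induce (X ∪ Y')) c' :=
  stmt_8_general G hconn X Y hunion hclique d k hd Y' hmark c hG
end

section
/- Let k ≥ 2, t = binom(k,2), let G be a graph with |V(G)| ≥ k+1 together with an edge coloring φ : E(G) → {1,…,t}, let δ > 0 be a real number, and let G' be the gadget graph with parameters ρ = ⌈δt/k⌉, k' = 2t + ρk and k° = ⌈(5/2)k'⌉ + 2 constructed from (G, k, φ, δ). If G contains a set S of k vertices inducing a clique in G whose binom(k,2) edges receive pairwise distinct colors under φ, then there exists a set F' of at most k' edges of G' such that contracting the edges of F' transforms G' into a split graph; equivalently, G' is k'-contractible to a split graph. -/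
/-- Vertices of the gadget graph built from `(G, φ, ρ, kc, t)` (here `t = binom(k,2)`):
`ρ` copies `zCopy u i` of every vertex `u` of `G` plus `kc + 2` extra vertices `zExtra`
(together forming the clique `Z`); an edge-selector vertex `es e` for every edge `e` of
`G`; cap vertices `cap i` and special vertices `sp i` for every color `i`; and `kc`
private pendant neighbors for every vertex of `Z`, every cap vertex and every special
vertex. -/
inductive GadgetVertex (V : Type) (G : SimpleGraph V) (ρ kc t : ℕ) where
  | zCopy : V → Fin ρ → GadgetVertex V G ρ kc t
  | zExtra : Fin (kc + 2) → GadgetVertex V G ρ kc t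
  | es : {e : Sym2 V // e ∈ G.edgeSet} → GadgetVertex V G ρ kc t
  | cap : Fin t → GadgetVertex V G ρ kc t
  | sp : Fin t → GadgetVertex V G ρ kc t
  | pendZCopy : V → Fin ρ → Fin kc → GadgetVertex V G ρ kc t
  | pendZExtra : Fin (kc + 2) → Fin kc → GadgetVertex V G ρ kc t
  | pendCap : Fin t → Fin kc → GadgetVertex V G ρ kc t
  | pendSp : Fin t → Fin kc → GadgetVertex V G ρ kc t

/-- The base relation describing the edges of the gadget graph: `Z` is a clique; the
edge-selector vertex `es e` (for `e = uv` of color `φ e`) is adjacent to all of `Z`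
except the copies of `u` and `v`, to the cap vertex `cap (φ e)` and to the special
vertex `sp (φ e)`; the special vertices form a clique; and each pendant vertex is
adjacent exactly to its base vertex. -/
def gadgetRel (V : Type) (G : SimpleGraph V) (ρ kc t : ℕ)
    (φ : {e : Sym2 V // e ∈ G.edgeSet} → Fin t) :
    GadgetVertex V G ρ kc t → GadgetVertex V G ρ kc t → Prop
  | .zCopy _ _, .zCopy _ _ => True
  | .zCopy _ _, .zExtra _ => True
  | .zExtra _, .zCopy _ _ => True
  | .zExtra _, .zExtra _ => True
  | .es e, .zCopy u _ => u ∉ (e.val : Sym2 V)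
  | .es _, .zExtra _ => True
  | .es e, .cap i => φ e = i
  | .es e, .sp i => φ e = i
  | .sp _, .sp _ => True
  | .pendZCopy u i _, .zCopy u' i' => u = u' ∧ i = i'
  | .pendZExtra j _, .zExtra j' => j = j'
  | .pendCap i _, .cap i' => i = i'
  | .pendSp i _, .sp i' => i = i'
  | _, _ => False

/-- The gadget graph `G'` constructed from `(G, k, φ, δ)`. -/
def gadgetGraph (V : Type) (G : SimpleGraph V) (ρ kc t : ℕ)
    (φ : {e : Sym2 V // e ∈ G.edgeSet} → Fin t) :
    SimpleGraph (GadgetVertex V G ρ kc t) :=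
  SimpleGraph.fromRel (gadgetRel V G ρ kc t φ)

/-!
Let `S` be the colorful `k`-clique and, for each color `i`, let `e i` be the edge of `S` of
color `i`. Contract the `ρ k` copies of the vertices of `S` in `Z` into one additional vertex
of `Z`, and contract both the cap `g i` and the special vertex `s i` into `w (e i)`; this costs
`2 t + ρ k = k'` contractions. Afterwards every remaining copy in `Z` belongs to a vertex
outside `S`, hence is adjacent to every `w (e i)`, and two vertices `w (e i)`, `w (e j)` are
joined through the edge `s i s j`. So `Z` together with the `w (e i)` is a clique, while the
remaining edge-selector vertices and the pendant vertices form an independent set.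
-/

open Function

namespace SimpleGraph

variable {α β : Type*}

def contract (G : SimpleGraph α) (ψ : α → β) : SimpleGraph β :=
  fromRel fun a b => ∃ u v, G.Adj u v ∧ ψ u = a ∧ ψ v = b

variable {G : SimpleGraph α} {ψ : α → β}

lemma contract_adj {a b : β} :
    (G.contract ψ).Adj a b ↔ a ≠ b ∧ ∃ u v, G.Adj u v ∧ ψ u = a ∧ ψ v = b := by
  refine (fromRel_adj _ a b).trans (and_congr_right fun _ => or_iff_left_of_imp ?_)
  rintro ⟨u, v, huv, rfl, rfl⟩
  exact ⟨v, u, huv.symm, rfl, rfl⟩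

lemma isWitnessStructure_contract (hψ : Surjective ψ)
    (hconn : ∀ b, (G.induce {v | ψ v = b}).Connected) :
    IsWitnessStructure G (G.contract ψ) ψ :=
  ⟨hψ, hconn, fun _ _ hne => contract_adj.trans (and_iff_right hne)⟩

lemma induce_connected_of_forall_adj {s : Set α} {c : α} (hc : c ∈ s)
    (hadj : ∀ v ∈ s, v ≠ c → G.Adj v c) : (G.induce s).Connected := by
  rw [connected_iff_exists_forall_reachable]
  refine ⟨⟨c, hc⟩, fun ⟨v, hv⟩ => ?_⟩
  obtain rfl | hne := eq_or_ne v c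
  · rfl
  · exact (Adj.reachable (by simpa using hadj v hv hne)).symm

end SimpleGraph

def IsSplitGraph {β : Type*} (H : SimpleGraph β) : Prop :=
  ∃ C I : Set β, C ∪ I = Set.univ ∧ Disjoint C I ∧
    (∀ u ∈ C, ∀ v ∈ C, u ≠ v → H.Adj u v) ∧ (∀ u ∈ I, ∀ v ∈ I, ¬ H.Adj u v)

def IsContractibleToSplit {α : Type*} (G : SimpleGraph α) (k : ℕ) : Prop :=
  ∃ (n : ℕ) (H : SimpleGraph (Fin n)) (ψ : α → Fin n),
    IsWitnessStructure G H ψ ∧ (∑ h : Fin n, ({v | ψ v = h}.ncard - 1)) ≤ k ∧ IsSplitGraph H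

lemma sum_ncard_fiber_inter {α β : Type*} [Finite α] [Fintype β] (ψ : α → β) (s : Set α) :
    ∑ b, ({v | ψ v = b} ∩ s).ncard = s.ncard := by
  classical
  have := Fintype.ofFinite α
  simp only [Set.ncard_eq_toFinset_card']
  rw [Finset.card_eq_sum_card_fiberwise (f := ψ) (t := Finset.univ) fun _ _ => Finset.mem_univ _]
  refine Finset.sum_congr rfl fun b _ => congrArg Finset.card ?_
  ext v
  simp [and_comm]

section Retraction

variable {α : Type*} [Finite α] {p : α → α}

/-- The vertices of the contracted graph are the fixed points of `p`, numbered by `Fin n`. -/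
noncomputable def retractionQuotient (hp : ∀ v, p (p v) = p v) (v : α) :
    Fin (Nat.card (fixedPoints p)) :=
  Finite.equivFin (fixedPoints p) ⟨p v, hp v⟩

lemma retractionQuotient_eq_iff (hp : ∀ v, p (p v) = p v) {v : α} {h : Fin _} :
    retractionQuotient hp v = h ↔ p v = ((Finite.equivFin (fixedPoints p)).symm h : α) := by
  rw [retractionQuotient, ← Equiv.eq_symm_apply, Subtype.ext_iff]

lemma retractionQuotient_surjective (hp : ∀ v, p (p v) = p v) :
    Surjective (retractionQuotient hp) := fun h =>
  ⟨_, retractionQuotient_eq_iff hp |>.2 ((Finite.equivFin (fixedPoints p)).symm h).2⟩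

lemma sum_ncard_fiber_retractionQuotient (hp : ∀ v, p (p v) = p v) :
    ∑ h, ({v | retractionQuotient hp v = h}.ncard - 1) = {v | p v ≠ v}.ncard := by
  rw [← sum_ncard_fiber_inter (retractionQuotient hp)]
  refine Finset.sum_congr rfl fun h _ => ?_
  set r := ((Finite.equivFin (fixedPoints p)).symm h : α)
  have hr : p r = r := ((Finite.equivFin (fixedPoints p)).symm h).2
  have hfiber : {v | retractionQuotient hp v = h} =
      insert r ({v | retractionQuotient hp v = h} ∩ {v | p v ≠ v}) := by
    ext v
    simp only [retractionQuotient_eq_iff, Set.mem_ofPred_eq, Set.mem_insert_iff, Set.mem_inter_iff]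
    constructor
    · intro hv
      by_cases hfix : p v = v
      · exact Or.inl (hfix ▸ hv)
      · exact Or.inr ⟨hv, hfix⟩
    · rintro (rfl | ⟨hv, -⟩)
      exacts [hr, hv]
  conv_lhs => rw [hfiber]
  rw [Set.ncard_insert_of_notMem (by simp [hr]), Nat.add_sub_cancel]

theorem isContractibleToSplit_of_retraction (G : SimpleGraph α) (C : α → Prop)
    (hp : ∀ v, p (p v) = p v) (hstar : ∀ v, p v ≠ v → G.Adj v (p v))
    (hclique : ∀ r r', p r = r → p r' = r' → C r → C r' → r ≠ r' →
      ∃ x y, G.Adj x y ∧ p x = r ∧ p y = r')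
    (hcover : ∀ x y, G.Adj x y → C (p x) ∨ C (p y)) {k : ℕ} (hk : {v | p v ≠ v}.ncard ≤ k) :
    IsContractibleToSplit G k := by
  let rep : Fin (Nat.card (fixedPoints p)) → α := fun h => (Finite.equivFin (fixedPoints p)).symm h
  have hrep : ∀ h, p (rep h) = rep h := fun h => ((Finite.equivFin (fixedPoints p)).symm h).2
  have hrep_inj : Injective rep := Subtype.val_injective.comp (Equiv.injective _)
  refine ⟨_, G.contract (retractionQuotient hp), retractionQuotient hp,
    SimpleGraph.isWitnessStructure_contract (retractionQuotient_surjective hp) fun h => ?_,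
    (sum_ncard_fiber_retractionQuotient hp).trans_le hk,
    {h | C (rep h)}, {h | C (rep h)}ᶜ, Set.union_compl_self _, disjoint_compl_right, ?_, ?_⟩
  · rw [show {v | retractionQuotient hp v = h} = {v | p v = rep h} from
      Set.ext fun v => retractionQuotient_eq_iff hp]
    refine SimpleGraph.induce_connected_of_forall_adj (hrep h) fun v hv hne => ?_
    rw [← (hv : p v = rep h)]
    exact hstar v (hv.trans_ne hne.symm)
  · intro h hh h' hh' hne
    obtain ⟨x, y, hxy, hx, hy⟩ :=
      hclique _ _ (hrep h) (hrep h') hh hh' (hrep_inj.ne hne)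
    exact SimpleGraph.contract_adj.2
      ⟨hne, x, y, hxy, retractionQuotient_eq_iff hp |>.2 hx, retractionQuotient_eq_iff hp |>.2 hy⟩
  · rintro h hh h' hh' hadj
    obtain ⟨-, x, y, hxy, hx, hy⟩ := SimpleGraph.contract_adj.1 hadj
    have hx : p x = rep h := (retractionQuotient_eq_iff hp).1 hx
    have hy : p y = rep h' := (retractionQuotient_eq_iff hp).1 hy
    rcases hcover x y hxy with hc | hc
    exacts [hh (show C (rep h) from hx ▸ hc), hh' (show C (rep h') from hy ▸ hc)]

end Retraction

lemma exists_edge_of_colorful_clique {V : Type} {G : SimpleGraph V} {k : ℕ} {S : Finset V}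
    (hS : S.card = k) (hclique : G.IsClique (S : Set V))
    {φ : {e : Sym2 V // e ∈ G.edgeSet} → Fin (k.choose 2)}
    (hcolorful : ∀ e₁ e₂ : {e : Sym2 V // e ∈ G.edgeSet},
      e₁.1 ∈ S.sym2 → e₂.1 ∈ S.sym2 → φ e₁ = φ e₂ → e₁ = e₂)
    (i : Fin (k.choose 2)) : ∃ e : {e : Sym2 V // e ∈ G.edgeSet}, e.1 ∈ S.sym2 ∧ φ e = i := by
  classical
  have hedge : ∀ p : Sym2 S, ¬ p.IsDiag → p.map Subtype.val ∈ G.edgeSet := by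
    refine Sym2.ind fun a b hab => ?_
    rw [Sym2.map_mk, SimpleGraph.mem_edgeSet]
    exact hclique a.2 b.2 fun h => hab (Sym2.mk_isDiag_iff.2 (Subtype.ext h))
  have hmem : ∀ p : Sym2 S, p.map Subtype.val ∈ S.sym2 := fun p =>
    Finset.mem_sym2_iff.2 fun x hx => by
      obtain ⟨a, -, rfl⟩ := Sym2.mem_map.1 hx
      exact a.2
  let J : {p : Sym2 S // ¬ p.IsDiag} → {e : Sym2 V // e ∈ G.edgeSet} :=
    fun p => ⟨p.1.map Subtype.val, hedge p.1 p.2⟩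
  have hinj : Injective (φ ∘ J) := fun p q h => Subtype.ext <|
    Sym2.map.injective Subtype.val_injective <| congrArg Subtype.val <|
      hcolorful _ _ (hmem p.1) (hmem q.1) h
  have hbij : Bijective (φ ∘ J) := (Fintype.bijective_iff_injective_and_card _).2
    ⟨hinj, by rw [Sym2.card_subtype_not_diag, Fintype.card_coe, hS, Fintype.card_fin]⟩
  obtain ⟨p, hp⟩ := hbij.2 i
  exact ⟨J p, hmem p.1, hp⟩

namespace GadgetVertex

variable {V : Type} {G : SimpleGraph V} {ρ kc t : ℕ}

instance [Finite V] : Finite (GadgetVertex V G ρ kc t) := by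
  refine Finite.of_injective (β := (V × Fin ρ) ⊕ Fin (kc + 2) ⊕ {e : Sym2 V // e ∈ G.edgeSet} ⊕
      Fin t ⊕ Fin t ⊕ (V × Fin ρ × Fin kc) ⊕ (Fin (kc + 2) × Fin kc) ⊕ (Fin t × Fin kc) ⊕
      (Fin t × Fin kc))
    (fun
      | .zCopy u j => .inl (u, j)
      | .zExtra j => .inr <| .inl j
      | .es e => .inr <| .inr <| .inl e
      | .cap i => .inr <| .inr <| .inr <| .inl i
      | .sp i => .inr <| .inr <| .inr <| .inr <| .inl i
      | .pendZCopy u j m => .inr <| .inr <| .inr <| .inr <| .inr <| .inl (u, j, m)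
      | .pendZExtra j m => .inr <| .inr <| .inr <| .inr <| .inr <| .inr <| .inl (j, m)
      | .pendCap i m => .inr <| .inr <| .inr <| .inr <| .inr <| .inr <| .inr <| .inl (i, m)
      | .pendSp i m => .inr <| .inr <| .inr <| .inr <| .inr <| .inr <| .inr <| .inr (i, m)) ?_
  intro a b h
  cases a <;> cases b <;> simp_all

variable (S : Finset V) (sel : Fin t → {e : Sym2 V // e ∈ G.edgeSet})

open Classical in
noncomputable def cliqueContraction : GadgetVertex V G ρ kc t → GadgetVertex V G ρ kc t
  | .zCopy u j => if u ∈ S then .zExtra 0 else .zCopy u j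
  | .cap i | .sp i => .es (sel i)
  | v => v

-- Caps and special vertices never survive the contraction; they are put on the clique side so
-- that every edge of the gadget has an endpoint there.
def IsCliqueSide : GadgetVertex V G ρ kc t → Prop
  | .es e => e.1 ∈ S.sym2
  | .pendZCopy .. | .pendZExtra .. | .pendCap .. | .pendSp .. => False
  | _ => True

def IsZOutside : GadgetVertex V G ρ kc t → Prop
  | .zCopy u _ => u ∉ S
  | .zExtra _ => True
  | _ => False

variable {S sel}

lemma cliqueContraction_idem (v : GadgetVertex V G ρ kc t) :
    cliqueContraction S sel (cliqueContraction S sel v) = cliqueContraction S sel v := by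
  cases v <;> (simp only [cliqueContraction]; try split_ifs) <;> simp_all

variable {φ : {e : Sym2 V // e ∈ G.edgeSet} → Fin t}

lemma adj_cliqueContraction (hsel : ∀ i, φ (sel i) = i) {v : GadgetVertex V G ρ kc t}
    (hv : cliqueContraction S sel v ≠ v) :
    (gadgetGraph V G ρ kc t φ).Adj v (cliqueContraction S sel v) := by
  cases v <;> simp only [cliqueContraction] at hv ⊢ <;> (try split_ifs at hv ⊢) <;>
    simp_all [gadgetGraph, gadgetRel]

lemma isCliqueSide_cliqueContraction (hselS : ∀ i, (sel i).1 ∈ S.sym2)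
    {v : GadgetVertex V G ρ kc t} (hv : cliqueContraction S sel v ≠ v) :
    IsCliqueSide S (cliqueContraction S sel v) := by
  cases v <;> simp only [cliqueContraction] at hv ⊢ <;> (try split_ifs at hv ⊢) <;>
    simp_all [IsCliqueSide, -Finset.mem_sym2_iff]

lemma isCliqueSide_or_of_adj {x y : GadgetVertex V G ρ kc t}
    (h : (gadgetGraph V G ρ kc t φ).Adj x y) : IsCliqueSide S x ∨ IsCliqueSide S y := by
  cases x <;> cases y <;> simp_all [gadgetGraph, gadgetRel, IsCliqueSide]

lemma isCliqueSide_cliqueContraction_or_of_adj (hselS : ∀ i, (sel i).1 ∈ S.sym2)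
    {x y : GadgetVertex V G ρ kc t} (h : (gadgetGraph V G ρ kc t φ).Adj x y) :
    IsCliqueSide S (cliqueContraction S sel x) ∨ IsCliqueSide S (cliqueContraction S sel y) := by
  by_cases hx : cliqueContraction S sel x = x
  · by_cases hy : cliqueContraction S sel y = y
    · rw [hx, hy]
      exact isCliqueSide_or_of_adj h
    · exact Or.inr (isCliqueSide_cliqueContraction hselS hy)
  · exact Or.inl (isCliqueSide_cliqueContraction hselS hx)

lemma isZOutside_or_of_isCliqueSide {r : GadgetVertex V G ρ kc t}
    (hr : cliqueContraction S sel r = r) (hC : IsCliqueSide S r) :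
    IsZOutside S r ∨ ∃ e, e.1 ∈ S.sym2 ∧ r = .es e := by
  cases r <;> simp only [cliqueContraction] at hr <;> (try split_ifs at hr) <;>
    simp_all [IsZOutside, IsCliqueSide, -Finset.mem_sym2_iff]

lemma adj_of_isZOutside {x y : GadgetVertex V G ρ kc t} (hx : IsZOutside S x)
    (hy : IsZOutside S y) (hne : x ≠ y) : (gadgetGraph V G ρ kc t φ).Adj x y := by
  cases x <;> cases y <;> simp_all [IsZOutside, gadgetGraph, gadgetRel]

lemma adj_es_of_isZOutside {x : GadgetVertex V G ρ kc t} (hx : IsZOutside S x)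
    {e : {e : Sym2 V // e ∈ G.edgeSet}} (he : e.1 ∈ S.sym2) :
    (gadgetGraph V G ρ kc t φ).Adj x (.es e) := by
  cases x with
  | zCopy u j =>
    simpa [gadgetGraph, gadgetRel] using fun hu => hx (Finset.mem_sym2_iff.1 he u hu)
  | zExtra j => simp [gadgetGraph, gadgetRel]
  | _ => exact hx.elim

lemma exists_adj_of_isCliqueSide (hsel : ∀ e, e.1 ∈ S.sym2 → sel (φ e) = e)
    {r r' : GadgetVertex V G ρ kc t} (hr : cliqueContraction S sel r = r)
    (hr' : cliqueContraction S sel r' = r') (hC : IsCliqueSide S r) (hC' : IsCliqueSide S r')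
    (hne : r ≠ r') :
    ∃ x y, (gadgetGraph V G ρ kc t φ).Adj x y ∧
      cliqueContraction S sel x = r ∧ cliqueContraction S sel y = r' := by
  rcases isZOutside_or_of_isCliqueSide hr hC with hZ | ⟨e, he, rfl⟩ <;>
    rcases isZOutside_or_of_isCliqueSide hr' hC' with hZ' | ⟨e', he', rfl⟩
  · exact ⟨r, r', adj_of_isZOutside hZ hZ' hne, hr, hr'⟩
  · exact ⟨r, _, adj_es_of_isZOutside hZ he', hr, hr'⟩
  · exact ⟨_, r', (adj_es_of_isZOutside hZ' he).symm, hr, hr'⟩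
  · have hφ : φ e ≠ φ e' := fun h => hne (by rw [← hsel e he, ← hsel e' he', h])
    refine ⟨.sp (φ e), .sp (φ e'), ?_, by simp [cliqueContraction, hsel e he],
      by simp [cliqueContraction, hsel e' he']⟩
    simp [gadgetGraph, gadgetRel, hφ]

lemma ncard_ne_cliqueContraction_le [Finite V] :
    {v : GadgetVertex V G ρ kc t | cliqueContraction S sel v ≠ v}.ncard ≤ 2 * t + ρ * S.card := by
  set copies := Set.range fun x : S × Fin ρ => (zCopy x.1 x.2 : GadgetVertex V G ρ kc t)
  set caps := Set.range (cap : Fin t → GadgetVertex V G ρ kc t)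
  set sps := Set.range (sp : Fin t → GadgetVertex V G ρ kc t)
  have hsub : {v | cliqueContraction S sel v ≠ v} ⊆ copies ∪ caps ∪ sps := by
    intro v hv
    cases v <;> simp only [cliqueContraction, Set.mem_ofPred_eq] at hv <;>
      (try split_ifs at hv) <;> simp_all [copies, caps, sps]
  have hcopies : copies.ncard ≤ ρ * S.card := by
    rw [← Nat.card_coe_set_eq]
    refine (Finite.card_range_le _).trans ?_
    simp [mul_comm]
  have hcaps : caps.ncard ≤ t := by
    rw [← Nat.card_coe_set_eq]
    exact (Finite.card_range_le _).trans (by simp)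
  have hsps : sps.ncard ≤ t := by
    rw [← Nat.card_coe_set_eq]
    exact (Finite.card_range_le _).trans (by simp)
  have := Set.ncard_le_ncard hsub
  have := Set.ncard_union_le (copies ∪ caps) sps
  have := Set.ncard_union_le copies caps
  omega

end GadgetVertex

theorem stmt_10_general {V : Type} [Fintype V] (k : ℕ)
    (G : SimpleGraph V)
    (φ : {e : Sym2 V // e ∈ G.edgeSet} → Fin (k.choose 2))
    (ρ k' kc : ℕ)
    (hk' : k' = 2 * k.choose 2 + ρ * k)
    (S : Finset V) (hS : S.card = k)
    (hclique : ∀ u ∈ S, ∀ v ∈ S, u ≠ v → G.Adj u v)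
    (hcolorful : ∀ e₁ e₂ : {e : Sym2 V // e ∈ G.edgeSet},
      (∀ x ∈ (e₁.val : Sym2 V), x ∈ S) → (∀ x ∈ (e₂.val : Sym2 V), x ∈ S) →
      φ e₁ = φ e₂ → e₁ = e₂) :
    ∃ (n : ℕ) (H : SimpleGraph (Fin n))
      (ψ : GadgetVertex V G ρ kc (k.choose 2) → Fin n),
      IsWitnessStructure (gadgetGraph V G ρ kc (k.choose 2) φ) H ψ ∧
      (∑ h : Fin n, ({v | ψ v = h}.ncard - 1)) ≤ k' ∧
      (∃ C I : Set (Fin n), C ∪ I = Set.univ ∧ Disjoint C I ∧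
        (∀ u ∈ C, ∀ v ∈ C, u ≠ v → H.Adj u v) ∧
        (∀ u ∈ I, ∀ v ∈ I, ¬ H.Adj u v)) := by
  have hcolorful' : ∀ e₁ e₂ : {e : Sym2 V // e ∈ G.edgeSet},
      e₁.1 ∈ S.sym2 → e₂.1 ∈ S.sym2 → φ e₁ = φ e₂ → e₁ = e₂ := fun e₁ e₂ h₁ h₂ =>
    hcolorful e₁ e₂ (Finset.mem_sym2_iff.1 h₁) (Finset.mem_sym2_iff.1 h₂)
  choose sel hselS hsel using exists_edge_of_colorful_clique hS
    (fun u hu v hv => hclique u hu v hv) hcolorful'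
  have hsel_unique : ∀ e, e.1 ∈ S.sym2 → sel (φ e) = e := fun e he =>
    hcolorful' _ _ (hselS _) he (hsel _)
  refine isContractibleToSplit_of_retraction (p := GadgetVertex.cliqueContraction S sel)
    (gadgetGraph V G ρ kc (k.choose 2) φ) (GadgetVertex.IsCliqueSide S)
    GadgetVertex.cliqueContraction_idem (fun _ => GadgetVertex.adj_cliqueContraction hsel)
    (fun _ _ => GadgetVertex.exists_adj_of_isCliqueSide hsel_unique)
    (fun _ _ => GadgetVertex.isCliqueSide_cliqueContraction_or_of_adj hselS) ?_
  simpa only [hk', hS] using GadgetVertex.ncard_ne_cliqueContraction_le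
    (V := V) (G := G) (ρ := ρ) (kc := kc) (S := S) (sel := sel)

/-- If `G` (with at least `k + 1` vertices) contains a colorful `k`-clique with respect
to the edge coloring `φ`, then the gadget graph `G'` with parameters
`ρ = ⌈δt/k⌉`, `k' = 2t + ρk`, `k° = ⌈(5/2)k'⌉ + 2` (where `t = binom(k,2)`) is
`k'`-contractible to a split graph. -/
theorem stmt_10 {V : Type} [Fintype V] (k : ℕ) (hk : 2 ≤ k)
    (G : SimpleGraph V) (hV : k + 1 ≤ Fintype.card V)
    (φ : {e : Sym2 V // e ∈ G.edgeSet} → Fin (k.choose 2))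
    (δ : ℝ) (hδ : 0 < δ)
    (ρ k' kc : ℕ)
    (hρ : ρ = ⌈δ * (k.choose 2 : ℝ) / (k : ℝ)⌉₊)
    (hk' : k' = 2 * k.choose 2 + ρ * k)
    (hkc : kc = ⌈(5 : ℝ) / 2 * (k' : ℝ)⌉₊ + 2)
    (S : Finset V) (hS : S.card = k)
    (hclique : ∀ u ∈ S, ∀ v ∈ S, u ≠ v → G.Adj u v)
    (hcolorful : ∀ e₁ e₂ : {e : Sym2 V // e ∈ G.edgeSet},
      (∀ x ∈ (e₁.val : Sym2 V), x ∈ S) → (∀ x ∈ (e₂.val : Sym2 V), x ∈ S) →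
      φ e₁ = φ e₂ → e₁ = e₂) :
    ∃ (n : ℕ) (H : SimpleGraph (Fin n))
      (ψ : GadgetVertex V G ρ kc (k.choose 2) → Fin n),
      IsWitnessStructure (gadgetGraph V G ρ kc (k.choose 2) φ) H ψ ∧
      (∑ h : Fin n, ({v | ψ v = h}.ncard - 1)) ≤ k' ∧
      (∃ C I : Set (Fin n), C ∪ I = Set.univ ∧ Disjoint C I ∧
        (∀ u ∈ C, ∀ v ∈ C, u ≠ v → H.Adj u v) ∧
        (∀ u ∈ I, ∀ v ∈ I, ¬ H.Adj u v)) :=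
  stmt_10_general k G φ ρ k' kc hk' S hS hclique hcolorful
end
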